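/- arXiv:2011.14109 — 7 statements merged into one kernel-verified Lean document; each statement's English description precedes it below -/
import Mathlib

section
/- Let q be a prime power and m, h, η positive integers with 1 ≤ η ≤ h. Let a ∈ F_{q^m} with a ≠ 0 and let β_1, …, β_η ∈ F_{q^m}. Let M ∈ F_{q^m}^{h×η} be the matrix whose entry in row u (for u = 0, 1, …, h−1) and column j is β_j^{q^u}·N_u(a). Then the rank of M equals the dimension over F_q of the F_q-linear subspace of F_{q^m} spanned by β_1, …, β_η. -/
/-!
Rescaling row `u` by the nonzero truncated norm `N_u(a)` does not change the rank, so it suffices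
to treat the Moore matrix `(β_j ^ q ^ u)`. Its columns are the images of the `β_j` under the
`F_q`-linear map `x ↦ (x ^ q ^ u)_u`, so its column space is spanned by the images of an
`F_q`-basis `x_1, …, x_d` of `span β`, and it remains to see that these are independent over
`K` when `d ≤ h`. A left kernel vector `μ` of the square Moore matrix of the `x_i` would give
a linearized polynomial `∑ μ_u X ^ q ^ u`, nonzero of degree at most `q ^ (d - 1)`, which is
`F_q`-linear and hence vanishes on all `q ^ d` elements of `span x`.
-/

open Polynomial Module Submodule

theorem Submodule.span_image_span {F R V W : Type*} [Semiring F] [Semiring R] [SMul F R]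
    [AddCommMonoid V] [Module F V] [AddCommMonoid W] [Module F W] [Module R W]
    [IsScalarTower F R W] (Φ : V →ₗ[F] W) (s : Set V) :
    span R (Φ '' span F s) = span R (Φ '' s) := by
  rw [← map_coe, map_span, span_span_of_tower]

theorem Submodule.span_range_coe_finBasis {F M : Type*} [Field F] [AddCommGroup M] [Module F M]
    (V : Submodule F M) [Module.Finite F V] :
    span F (Set.range fun i => (finBasis F V i : M)) = V := by
  rw [show (fun i => (finBasis F V i : M)) = V.subtype ∘ finBasis F V from rfl, Set.range_comp,
    span_image, (finBasis F V).span_eq, map_subtype_top]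

section Moore

variable {K : Type*} [Field K]

noncomputable def linearizedPolynomial (q : ℕ) {d : ℕ} (μ : Fin d → K) : K[X] :=
  ∑ u, C (μ u) * X ^ q ^ (u : ℕ)

namespace linearizedPolynomial

variable {q d : ℕ} (μ : Fin d → K)

@[simp]
lemma eval_eq (x : K) : (linearizedPolynomial q μ).eval x = ∑ u, μ u * x ^ q ^ (u : ℕ) := by
  simp [linearizedPolynomial, eval_finsetSum]

lemma coeff_pow (hq : 1 < q) (u : Fin d) :
    (linearizedPolynomial q μ).coeff (q ^ (u : ℕ)) = μ u := by
  have hinj : Function.Injective fun v : Fin d => q ^ (v : ℕ) :=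
    fun v w hvw => Fin.val_injective (Nat.pow_right_injective hq hvw)
  simp only [linearizedPolynomial, finsetSum_coeff, coeff_C_mul, coeff_X_pow]
  rw [Finset.sum_eq_single u (fun v _ hvu => by rw [if_neg (hinj.ne hvu).symm, mul_zero])
    (by simp)]
  simp

lemma ne_zero (hq : 1 < q) (hμ : μ ≠ 0) : linearizedPolynomial q μ ≠ 0 := by
  obtain ⟨u, hu⟩ := Function.ne_iff.mp hμ
  intro h
  exact hu (by rw [← coeff_pow μ hq u, h, coeff_zero, Pi.zero_apply])

lemma natDegree_le (hq : 0 < q) : (linearizedPolynomial q μ).natDegree ≤ q ^ (d - 1) :=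
  natDegree_sum_le_of_forall_le _ _ fun u _ =>
    (natDegree_C_mul_X_pow_le _ _).trans (Nat.pow_le_pow_right hq (by omega))

variable (Fq : Type*) [Field Fq] [Fintype Fq] [Algebra Fq K]

lemma eval_eq_zero_of_mem_span {ι : Type*} {x : ι → K}
    (hx : ∀ i, (linearizedPolynomial (Fintype.card Fq) μ).eval (x i) = 0) {y : K}
    (hy : y ∈ span Fq (Set.range x)) : (linearizedPolynomial (Fintype.card Fq) μ).eval y = 0 := by
  let L : K →ₗ[Fq] K := ∑ u, μ u • (FiniteField.frobeniusAlgHom Fq K ^ (u : ℕ)).toLinearMap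
  have hL : ∀ z, L z = (linearizedPolynomial (Fintype.card Fq) μ).eval z := by
    intro z
    simp [L, AlgHom.coe_pow, FiniteField.coe_frobeniusAlgHom, pow_iterate]
  have hspan : span Fq (Set.range x) ≤ LinearMap.ker L :=
    span_le.mpr <| Set.range_subset_iff.mpr fun i => by simp [hL, hx]
  rw [← hL]
  exact hspan hy

end linearizedPolynomial

noncomputable def mooreMatrix (q h : ℕ) {ι : Type*} (x : ι → K) : Matrix (Fin h) ι K :=
  Matrix.of fun u i => x i ^ q ^ (u : ℕ)

variable (Fq : Type*) [Field Fq] [Fintype Fq] [Algebra Fq K]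

theorem det_mooreMatrix_ne_zero {d : ℕ} {x : Fin d → K} (hx : LinearIndependent Fq x) :
    (mooreMatrix (Fintype.card Fq) d x).det ≠ 0 := by
  classical
  intro hdet
  obtain ⟨μ, hμ, hμx⟩ := Matrix.exists_vecMul_eq_zero_iff.mpr hdet
  have hd : 0 < d := Nat.pos_of_ne_zero (by rintro rfl; exact hμ (Subsingleton.elim _ _))
  have hroots : ∀ i, (linearizedPolynomial (Fintype.card Fq) μ).eval (x i) = 0 := fun i => by
    simpa [Matrix.vecMul, dotProduct, mooreMatrix] using congrFun hμx i
  let V := span Fq (Set.range x)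
  have : Module.Finite Fq V := .span_of_finite Fq (Set.finite_range x)
  have : Finite V := Module.finite_of_finite Fq
  let : Fintype V := Fintype.ofFinite V
  have hcard : Fintype.card V = Fintype.card Fq ^ d := by
    rw [Fintype.card_eq_nat_card, natCard_eq_pow_finrank (K := Fq), Nat.card_eq_fintype_card,
      finrank_span_eq_card hx, Fintype.card_fin]
  refine linearizedPolynomial.ne_zero μ Fintype.one_lt_card hμ
    (eq_zero_of_natDegree_lt_card_of_eval_eq_zero _ Subtype.val_injective
      (fun y => linearizedPolynomial.eval_eq_zero_of_mem_span μ Fq hroots y.2) ?_)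
  rw [hcard]
  exact (linearizedPolynomial.natDegree_le μ Fintype.card_pos).trans_lt
    (Nat.pow_lt_pow_right Fintype.one_lt_card (by omega))

theorem linearIndependent_mooreMatrix_col {d h : ℕ} {x : Fin d → K} (hx : LinearIndependent Fq x)
    (hdh : d ≤ h) : LinearIndependent K (mooreMatrix (Fintype.card Fq) h x).col :=
  LinearIndependent.of_comp (LinearMap.funLeft K K (Fin.castLE hdh))
    (Matrix.linearIndependent_cols_of_det_ne_zero (det_mooreMatrix_ne_zero Fq hx))

noncomputable def mooreMap (h : ℕ) : K →ₗ[Fq] Fin h → K :=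
  LinearMap.pi fun u => (FiniteField.frobeniusAlgHom Fq K ^ (u : ℕ)).toLinearMap

theorem range_mooreMatrix_col (h : ℕ) {ι : Type*} (x : ι → K) :
    Set.range (mooreMatrix (Fintype.card Fq) h x).col = mooreMap Fq h '' Set.range x := by
  rw [← Set.range_comp]
  congr 1
  ext j u
  simp [mooreMatrix, mooreMap, AlgHom.coe_pow, FiniteField.coe_frobeniusAlgHom, pow_iterate]

theorem rank_mooreMatrix {h : ℕ} {ι : Type*} [Fintype ι] (β : ι → K)
    (hβ : finrank Fq (span Fq (Set.range β)) ≤ h) :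
    (mooreMatrix (Fintype.card Fq) h β).rank = finrank Fq (span Fq (Set.range β)) := by
  set V := span Fq (Set.range β)
  have : Module.Finite Fq V := .span_of_finite Fq (Set.finite_range β)
  let x : Fin (finrank Fq V) → K := fun i => finBasis Fq V i
  have hx : LinearIndependent Fq x := (finBasis Fq V).linearIndependent.map' V.subtype V.ker_subtype
  have hcols := finrank_span_eq_card (linearIndependent_mooreMatrix_col Fq hx hβ)
  rw [Fintype.card_fin] at hcols
  rw [Matrix.rank_eq_finrank_span_cols, ← hcols, range_mooreMatrix_col, range_mooreMatrix_col,
    ← span_image_span _ (Set.range x), span_range_coe_finBasis, span_image_span]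

end Moore

theorem extended_moore_rank_eq_finrank_span_general
    (q h η : ℕ) (hηh : η ≤ h)
    (Fq K : Type) [Field Fq] [Field K] [Fintype Fq] [Algebra Fq K]
    (hcardFq : Fintype.card Fq = q)
    (a : K) (ha : a ≠ 0) (β : Fin η → K)
    (M : Matrix (Fin h) (Fin η) K)
    (hM : ∀ (u : Fin h) (j : Fin η),
      M u j = β j ^ q ^ (u : ℕ) * a ^ ((q ^ (u : ℕ) - 1) / (q - 1))) :
    M.rank = Module.finrank Fq ↥(Submodule.span Fq (Set.range β)) := by
  subst hcardFq
  set N : Fin h → K := fun u => a ^ ((Fintype.card Fq ^ (u : ℕ) - 1) / (Fintype.card Fq - 1))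
  have hM_eq : M = Matrix.diagonal N * mooreMatrix (Fintype.card Fq) h β := by
    ext u j
    simp [hM, N, mooreMatrix, mul_comm]
  have hN : (Matrix.diagonal N).det ≠ 0 := by
    simp [Matrix.det_diagonal, Finset.prod_ne_zero_iff, N, ha]
  have hβ : finrank Fq (span Fq (Set.range β)) ≤ h :=
    (finrank_range_le_card β).trans (by simpa using hηh)
  rw [hM_eq, Matrix.rank_mul_eq_right_of_det_ne_zero _ _ hN, rank_mooreMatrix Fq β hβ]

/-- The rank of a one-block extended Moore matrix equals the dimension over
`F_q` of the `F_q`-subspace of `F_{q^m}` spanned by the evaluation points. -/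
theorem extended_moore_rank_eq_finrank_span
    (q m h η : ℕ) (hq : IsPrimePow q) (hm : 0 < m) (hh : 0 < h)
    (hη : 1 ≤ η) (hηh : η ≤ h)
    (Fq K : Type) [Field Fq] [Field K] [Fintype Fq] [Fintype K] [Algebra Fq K]
    (hcardFq : Fintype.card Fq = q) (hcardK : Fintype.card K = q ^ m)
    (a : K) (ha : a ≠ 0) (β : Fin η → K)
    (M : Matrix (Fin h) (Fin η) K)
    (hM : ∀ (u : Fin h) (j : Fin η),
      M u j = β j ^ q ^ (u : ℕ) * a ^ ((q ^ (u : ℕ) - 1) / (q - 1))) :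
    M.rank = Module.finrank Fq ↥(Submodule.span Fq (Set.range β)) :=
  extended_moore_rank_eq_finrank_span_general q h η hηh Fq K hcardFq a ha β M hM
end

section
/- Let q be a prime power and m a positive integer. Let a_1, …, a_ℓ ∈ F_{q^m} be nonzero and pairwise non-conjugate in F_{q^m} with respect to σ(x) = x^q, and for each i = 1,…,ℓ let β_{i,1}, …, β_{i,η_i} ∈ F_{q^m} be nonzero elements, with η_i ≥ 1. Set h = N = η_1 + η_2 + ⋯ + η_ℓ. Let V ∈ F_{q^m}^{h×N} be the matrix whose entry in row u (for u = 0, 1, …, h−1) and in the column indexed by (i,j) is N_u(β_{i,j}^{q−1}·a_i). For each i, let V_i ∈ F_{q^m}^{h×η_i} be the submatrix of V consisting of the columns indexed by (i,1), …, (i,η_i). Then rank(V) = rank(V_1) + rank(V_2) + ⋯ + rank(V_ℓ). -/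
/-!
Write `L_a(b) = a * σ b` for a ring endomorphism `σ` of `K`. For the Frobenius
`σ x = x ^ q`, `N_u(β ^ (q - 1) * a) = β⁻¹ * L_a^u(β)`, and `b ↦ (L_a^u(b))_u` is `F_q`-linear.
So the columns of the `i`-th block span the same `K`-space as the images of an `F_q`-basis of the
`F_q`-span of the `β_{i,j}`, and the theorem reduces to the `K`-linear independence of all these
images taken together, a twisted Vandermonde statement.

That independence goes by induction on the number of rows. Given a relation `∑ g_x L^u(B_x) = 0`
for `u < n` with `g_{x₀} ≠ 0`, subtracting `g_{x₀} a_{x₀} σ(relation at u)` from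
`σ(g_{x₀}) (relation at u + 1)` gives a relation for `u < n - 1` on the family `L(B_x)`, with one
coefficient fewer. Once it vanishes, every `g_x / g_{x₀}` is fixed by `σ` and, by
non-conjugacy, nonzero only in the block of `x₀`, which contradicts the independence of `B` over
the fixed field.
-/

open Finset

section Twisted

variable {K : Type*} [Field K] (σ : K →+* K)

def twistedMul (a b : K) : K := a * σ b

def TwistedConj (a b : K) : Prop := ∃ c : K, c ≠ 0 ∧ c * b = σ c * a

def FixedIndependent {τ : Type*} [Fintype τ] (v : τ → K) : Prop :=
  ∀ c : τ → K, (∀ t, σ (c t) = c t) → ∑ t, c t * v t = 0 → c = 0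

variable {σ}

theorem FixedIndependent.comp_twistedMul {τ : Type*} [Fintype τ] {v : τ → K}
    (hv : FixedIndependent σ v) {a : K} (ha : a ≠ 0) :
    FixedIndependent σ fun t => twistedMul σ a (v t) := by
  intro c hc h
  have hmul : a * σ (∑ t, c t * v t) = 0 := by
    rw [map_sum, Finset.mul_sum, ← h]
    refine Finset.sum_congr rfl fun t _ => ?_
    simp only [twistedMul, map_mul, hc]
    ring
  exact hv c hc ((map_eq_zero σ).1 <| (mul_eq_zero.1 hmul).resolve_left ha)

theorem TwistedConj.exists_eq_pow_mul {q : ℕ} (hq : q ≠ 0) (hσ : ∀ x, σ x = x ^ q) {a b : K}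
    (h : TwistedConj σ a b) : ∃ c : K, c ≠ 0 ∧ b = c ^ (q - 1) * a := by
  obtain ⟨c, hc, h⟩ := h
  refine ⟨c, hc, mul_left_cancel₀ hc ?_⟩
  rw [h, hσ, ← mul_assoc, mul_pow_sub_one hq]

theorem twistedMul_iterate_conj {c : K} (hc : c ≠ 0) (a b : K) (u : ℕ) :
    (twistedMul σ (σ c * c⁻¹ * a))^[u] b = c⁻¹ * (twistedMul σ a)^[u] (c * b) := by
  induction u with
  | zero => simp [hc]
  | succ u ih =>
    have hσc : σ c ≠ 0 := (map_ne_zero σ).2 hc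
    rw [Function.iterate_succ_apply', Function.iterate_succ_apply', ih]
    simp only [twistedMul, map_mul, map_inv₀]
    field_simp

theorem twistedMul_iterate_one_eq_pow {q : ℕ} (hq : 1 < q) (hσ : ∀ x, σ x = x ^ q) (x : K)
    (u : ℕ) : (twistedMul σ x)^[u] 1 = x ^ ((q ^ u - 1) / (q - 1)) := by
  rw [← Nat.geomSum_eq hq]
  induction u with
  | zero => simp
  | succ u ih =>
    rw [Function.iterate_succ_apply', ih, twistedMul, hσ, Finset.sum_range_succ']
    simp only [pow_succ, ← Finset.sum_mul, pow_zero, pow_mul]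
    ring

theorem mul_pow_geom_eq_twistedMul_iterate {q : ℕ} (hq : 1 < q) (hσ : ∀ x, σ x = x ^ q)
    {β : K} (hβ : β ≠ 0) (a : K) (u : ℕ) :
    (β ^ (q - 1) * a) ^ ((q ^ u - 1) / (q - 1)) = β⁻¹ * (twistedMul σ a)^[u] β := by
  have hβq : β ^ (q - 1) = σ β * β⁻¹ := by rw [hσ, pow_sub₀ β hβ hq.le, pow_one]
  rw [← twistedMul_iterate_one_eq_pow hq hσ, hβq, twistedMul_iterate_conj hβ, mul_one]

theorem twistedConj_of_mul_eq {a a₀ g g₀ : K} (hg₀ : g₀ ≠ 0) (hg : g ≠ 0)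
    (h : σ g₀ * g * a = g₀ * a₀ * σ g) : TwistedConj σ a₀ a := by
  have hσg₀ : σ g₀ ≠ 0 := (map_ne_zero σ).2 hg₀
  refine ⟨g / g₀, div_ne_zero hg hg₀, ?_⟩
  rw [map_div₀]
  field_simp
  linear_combination h

theorem map_div_eq_self_of_mul_eq {a₀ g g₀ : K} (hg₀ : g₀ ≠ 0) (ha₀ : a₀ ≠ 0)
    (h : σ g₀ * g * a₀ = g₀ * a₀ * σ g) : σ (g / g₀) = g / g₀ := by
  have hσg₀ : σ g₀ ≠ 0 := (map_ne_zero σ).2 hg₀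
  rw [map_div₀, div_eq_div_iff hσg₀ hg₀]
  exact mul_right_cancel₀ ha₀ (by linear_combination -h)

variable {ι : Type*} [Fintype ι] {τ : ι → Type*} [∀ i, Fintype (τ i)] {a : ι → K}

theorem sum_mul_twistedMul_iterate_shift (ha : ∀ i, a i ≠ 0) (B : ∀ i, τ i → K)
    (g : (Σ i, τ i) → K) (g₀ a₀ : K) (u : ℕ) :
    ∑ x, (σ g₀ * g x - g₀ * a₀ * σ (g x) / a x.1) *
        (twistedMul σ (a x.1))^[u] (twistedMul σ (a x.1) (B x.1 x.2))
      = σ g₀ * ∑ x, g x * (twistedMul σ (a x.1))^[u + 1] (B x.1 x.2)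
        - g₀ * a₀ * σ (∑ x, g x * (twistedMul σ (a x.1))^[u] (B x.1 x.2)) := by
  simp only [map_sum, Finset.mul_sum, ← Finset.sum_sub_distrib]
  refine Finset.sum_congr rfl fun x _ => ?_
  have hx := ha x.1
  rw [← Function.iterate_succ_apply, Function.iterate_succ_apply', twistedMul, map_mul]
  field_simp

theorem eq_zero_of_forall_twisted_eq (ha : ∀ i, a i ≠ 0)
    (hconj : Pairwise fun i i' => ¬ TwistedConj σ (a i) (a i')) {B : ∀ i, τ i → K}
    (hB : ∀ i, FixedIndependent σ (B i)) {g : (Σ i, τ i) → K} (x₀ : Σ i, τ i)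
    (heq : ∀ x, σ (g x₀) * g x * a x.1 = g x₀ * a x₀.1 * σ (g x))
    (hsum : ∑ x, g x * B x.1 x.2 = 0) : g x₀ = 0 := by
  by_contra hx₀
  have hblock : ∀ x, g x ≠ 0 → x.1 = x₀.1 := fun x hx => by
    by_contra hne
    exact hconj (Ne.symm hne) (twistedConj_of_mul_eq hx₀ hx (heq x))
  have hfix : ∀ x, σ (g x / g x₀) = g x / g x₀ := fun x => by
    by_cases hx : g x = 0
    · simp [hx]
    · have h := heq x
      rw [hblock x hx] at h
      exact map_div_eq_self_of_mul_eq hx₀ (ha x₀.1) h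
  have hsum₀ : ∑ t, g ⟨x₀.1, t⟩ / g x₀ * B x₀.1 t = 0 := by
    rw [Fintype.sum_sigma, Finset.sum_eq_single x₀.1] at hsum
    · simp only [div_mul_eq_mul_div, ← Finset.sum_div, hsum, zero_div]
    · intro i _ hi
      refine Finset.sum_eq_zero fun t _ => ?_
      rw [not_imp_comm.1 (hblock ⟨i, t⟩) hi, zero_mul]
    · simp
  have := congrFun (hB x₀.1 _ (fun t => hfix _) hsum₀) x₀.2
  simp [hx₀] at this

theorem eq_zero_of_sum_mul_twistedMul_iterate [DecidableEq K] (ha : ∀ i, a i ≠ 0)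
    (hconj : Pairwise fun i i' => ¬ TwistedConj σ (a i) (a i')) (n : ℕ) (B : ∀ i, τ i → K)
    (hB : ∀ i, FixedIndependent σ (B i)) (g : (Σ i, τ i) → K) (hg : #{x | g x ≠ 0} ≤ n)
    (hsum : ∀ u < n, ∑ x, g x * (twistedMul σ (a x.1))^[u] (B x.1 x.2) = 0) : g = 0 := by
  classical
  induction n generalizing B g with
  | zero =>
    ext x
    by_contra hx
    exact (Finset.card_pos.2 ⟨x, by simpa using hx⟩).ne' (Nat.le_zero.1 hg)
  | succ n ih =>
    by_contra hg0
    obtain ⟨x₀, hx₀⟩ := Function.ne_iff.1 hg0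
    set e : (Σ i, τ i) → K := fun x => σ (g x₀) * g x - g x₀ * a x₀.1 * σ (g x) / a x.1
    have he_supp : ({x | e x ≠ 0} : Finset _) ⊆ ({x | g x ≠ 0} : Finset _).erase x₀ := by
      intro x hx
      simp only [mem_erase, mem_filter, mem_univ, true_and] at hx ⊢
      refine ⟨fun h => hx ?_, fun h => hx ?_⟩
      · simp only [e, h]
        field_simp [ha x₀.1]
        ring
      · simp [e, h]
    have he : e = 0 := by
      refine ih (fun i t => twistedMul σ (a i) (B i t)) (fun i => (hB i).comp_twistedMul (ha i))
        e ?_ fun u hu => ?_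
      · have := card_le_card he_supp
        rw [card_erase_of_mem (by simpa using hx₀)] at this
        omega
      · rw [sum_mul_twistedMul_iterate_shift ha, hsum u (by omega), hsum (u + 1) (by omega)]
        simp
    refine hx₀ <|
      eq_zero_of_forall_twisted_eq ha hconj hB x₀ (fun x => ?_) (by simpa using hsum 0)
    have hx := congrFun he x
    simp only [e, Pi.zero_apply, sub_eq_zero] at hx
    have := ha x.1
    field_simp at hx
    linear_combination hx

theorem linearIndependent_twistedMul_iterate (ha : ∀ i, a i ≠ 0)
    (hconj : Pairwise fun i i' => ¬ TwistedConj σ (a i) (a i')) {B : ∀ i, τ i → K}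
    (hB : ∀ i, FixedIndependent σ (B i)) {n : ℕ} (hn : ∑ i, Fintype.card (τ i) ≤ n) :
    LinearIndependent K fun x : Σ i, τ i => fun u : Fin n =>
      (twistedMul σ (a x.1))^[u] (B x.1 x.2) := by
  classical
  rw [Fintype.linearIndependent_iff]
  intro g hg
  refine congrFun (eq_zero_of_sum_mul_twistedMul_iterate ha hconj n B hB g ?_ fun u hu => ?_)
  · exact (card_filter_le _ _).trans (by rwa [card_univ, Fintype.card_sigma])
  · simpa using congrFun hg ⟨u, hu⟩

end Twisted

section Frobenius

variable (F : Type*) {L : Type*} [Field F] [Fintype F] [Field L] [Algebra F L]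

theorem mem_range_algebraMap_of_pow_card_eq_self {x : L} (hx : x ^ Fintype.card F = x) :
    x ∈ (algebraMap F L).range := by
  have hq : 1 < Fintype.card F := Fintype.one_lt_card
  refine Polynomial.Splits.mem_range_of_isRoot ?_ (FiniteField.X_pow_card_sub_X_ne_zero F hq)
    (by simp [hx])
  rw [Polynomial.splits_iff_card_roots, FiniteField.roots_X_pow_card_sub_X,
    FiniteField.X_pow_card_sub_X_natDegree_eq F hq]
  rfl

variable {F}

theorem LinearIndependent.fixedIndependent_frobenius {τ : Type*} [Fintype τ] {v : τ → L}
    (hv : LinearIndependent F v) :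
    FixedIndependent (FiniteField.frobeniusAlgHom F L : L →+* L) v := by
  intro c hc h
  choose l hl using fun t => mem_range_algebraMap_of_pow_card_eq_self F (hc t)
  have hl0 := Fintype.linearIndependent_iff.1 hv l (by simpa [Algebra.smul_def, hl] using h)
  ext t
  rw [← hl t, hl0 t, map_zero, Pi.zero_apply]

variable (F)

def twistedOrbitₗ (a : L) (n : ℕ) : L →ₗ[F] Fin n → L :=
  LinearMap.pi fun u : Fin n =>
    (LinearMap.mulLeft F a ∘ₗ (FiniteField.frobeniusAlgHom F L).toLinearMap) ^ (u : ℕ)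

theorem twistedOrbitₗ_apply (a : L) (n : ℕ) (b : L) (u : Fin n) :
    twistedOrbitₗ F a n b u =
      (twistedMul (FiniteField.frobeniusAlgHom F L : L →+* L) a)^[u] b :=
  Module.End.pow_apply ..

end Frobenius

theorem Submodule.span_range_smul_of_ne_zero {K M ι : Type*} [Field K] [AddCommGroup M]
    [Module K M] {c : ι → K} (hc : ∀ i, c i ≠ 0) (v : ι → M) :
    span K (Set.range fun i => c i • v i) = span K (Set.range v) := by
  simp only [span_range_eq_iSup, span_singleton_smul_eq (hc _).isUnit]

theorem Submodule.span_range_comp_eq_of_span_eq {F K V M κ τ : Type*} [Field F] [Field K]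
    [Algebra F K] [AddCommGroup V] [Module F V] [AddCommGroup M] [Module F M] [Module K M]
    [IsScalarTower F K M] (φ : V →ₗ[F] M) {v : κ → V} {w : τ → V}
    (h : span F (Set.range v) = span F (Set.range w)) :
    span K (Set.range (φ ∘ v)) = span K (Set.range (φ ∘ w)) := by
  rw [Set.range_comp, Set.range_comp, ← span_span_of_tower F, ← map_span, h, map_span,
    span_span_of_tower]

theorem Matrix.rank_eq_sum_rank_of_span_eq {K m ι : Type*} [Field K] [Fintype ι]
    {κ τ : ι → Type*} [∀ i, Fintype (κ i)] [∀ i, Fintype (τ i)]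
    (V : Matrix m (Σ i, κ i) K)
    (F : (Σ i, τ i) → m → K) (hF : LinearIndependent K F)
    (hspan : ∀ i, Submodule.span K (Set.range fun j => V.col ⟨i, j⟩)
      = Submodule.span K (Set.range fun t => F ⟨i, t⟩)) :
    V.rank = ∑ i, (V.submatrix id (Sigma.mk i)).rank := by
  have hblock : ∀ i, (V.submatrix id (Sigma.mk i)).rank = Fintype.card (τ i) := fun i => by
    rw [rank_eq_finrank_span_cols]
    change Module.finrank K (Submodule.span K (Set.range fun j => V.col ⟨i, j⟩)) = _
    rw [hspan i]
    exact finrank_span_eq_card (hF.comp _ sigma_mk_injective)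
  have hV : Submodule.span K (Set.range V.col) = Submodule.span K (Set.range F) := by
    rw [Set.range_sigma_eq_iUnion_range, Set.range_sigma_eq_iUnion_range,
      Submodule.span_iUnion, Submodule.span_iUnion]
    exact iSup_congr hspan
  rw [rank_eq_finrank_span_cols, hV, finrank_span_eq_card hF, Fintype.card_sigma]
  simp only [hblock]

theorem rank_eq_sum_rank_blocks_general
    (q ℓ : ℕ)
    (Fq K : Type) [Field Fq] [Field K] [Fintype Fq] [Algebra Fq K]
    (hcardFq : Fintype.card Fq = q)
    (a : Fin ℓ → K) (ha : ∀ i, a i ≠ 0)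
    (hconj : ∀ i i' : Fin ℓ, i ≠ i' →
      ¬ ∃ c : K, c ≠ 0 ∧ a i' = c ^ (q - 1) * a i)
    (η : Fin ℓ → ℕ)
    (β : (i : Fin ℓ) → Fin (η i) → K) (hβ : ∀ i j, β i j ≠ 0)
    (N : ℕ) (hN : N = ∑ i, η i)
    (V : Matrix (Fin N) ((i : Fin ℓ) × Fin (η i)) K)
    (hV : ∀ (u : Fin N) (c : (i : Fin ℓ) × Fin (η i)),
      V u c = (β c.1 c.2 ^ (q - 1) * a c.1) ^ ((q ^ (u : ℕ) - 1) / (q - 1))) :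
    V.rank = ∑ i : Fin ℓ,
      (V.submatrix id (fun j : Fin (η i) =>
        (⟨i, j⟩ : (i : Fin ℓ) × Fin (η i)))).rank := by
  subst hcardFq
  set σ : K →+* K := (FiniteField.frobeniusAlgHom Fq K : K →+* K)
  have hσ : ∀ x, σ x = x ^ Fintype.card Fq := fun x => rfl
  have hσconj : Pairwise fun i i' => ¬ TwistedConj σ (a i) (a i') := fun i i' hii' h =>
    hconj i i' hii' (h.exists_eq_pow_mul Fintype.card_ne_zero hσ)
  choose κ s hs_inj hs_span hs_li using fun i => exists_linearIndependent' Fq (β i)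
  have : ∀ i, Fintype (κ i) := fun i => have := Finite.of_injective _ (hs_inj i); .ofFinite _
  have hcard : ∑ i, Fintype.card (κ i) ≤ N := hN ▸ Finset.sum_le_sum fun i _ =>
    (Fintype.card_le_of_injective _ (hs_inj i)).trans_eq (Fintype.card_fin _)
  have hF : LinearIndependent K fun x : Σ i, κ i =>
      twistedOrbitₗ Fq (a x.1) N (β x.1 (s x.1 x.2)) := by
    convert linearIndependent_twistedMul_iterate ha hσconj
      (fun i => (hs_li i).fixedIndependent_frobenius) hcard using 3
    exact twistedOrbitₗ_apply ..
  refine Matrix.rank_eq_sum_rank_of_span_eq V _ hF fun i => ?_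
  have hcol :
      (fun j => V.col ⟨i, j⟩) = fun j => (β i j)⁻¹ • twistedOrbitₗ Fq (a i) N (β i j) := by
    ext j u
    rw [Matrix.col_apply, hV, mul_pow_geom_eq_twistedMul_iterate Fintype.one_lt_card hσ (hβ i j),
      Pi.smul_apply, twistedOrbitₗ_apply, smul_eq_mul]
  rw [hcol, Submodule.span_range_smul_of_ne_zero fun j => inv_ne_zero (hβ i j)]
  exact Submodule.span_range_comp_eq_of_span_eq _ (hs_span i).symm

/-- For pairwise non-conjugate `a_i` and nonzero `β_{i,j}`, the rank of the
square matrix with entries `N_u(β_{i,j}^{q-1}·a_i)` equals the sum of the ranks of its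
blocks of columns. -/
theorem rank_eq_sum_rank_blocks
    (q m ℓ : ℕ) (hq : IsPrimePow q) (hm : 0 < m) (hℓ : 0 < ℓ)
    (Fq K : Type) [Field Fq] [Field K] [Fintype Fq] [Fintype K] [Algebra Fq K]
    (hcardFq : Fintype.card Fq = q) (hcardK : Fintype.card K = q ^ m)
    (a : Fin ℓ → K) (ha : ∀ i, a i ≠ 0)
    (hconj : ∀ i i' : Fin ℓ, i ≠ i' →
      ¬ ∃ c : K, c ≠ 0 ∧ a i' = c ^ (q - 1) * a i)
    (η : Fin ℓ → ℕ) (hη : ∀ i, 1 ≤ η i)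
    (β : (i : Fin ℓ) → Fin (η i) → K) (hβ : ∀ i j, β i j ≠ 0)
    (N : ℕ) (hN : N = ∑ i, η i)
    (V : Matrix (Fin N) ((i : Fin ℓ) × Fin (η i)) K)
    (hV : ∀ (u : Fin N) (c : (i : Fin ℓ) × Fin (η i)),
      V u c = (β c.1 c.2 ^ (q - 1) * a c.1) ^ ((q ^ (u : ℕ) - 1) / (q - 1))) :
    V.rank = ∑ i : Fin ℓ,
      (V.submatrix id (fun j : Fin (η i) =>
        (⟨i, j⟩ : (i : Fin ℓ) × Fin (η i)))).rank :=
  rank_eq_sum_rank_blocks_general q ℓ Fq K hcardFq a ha hconj η β hβ N hN V hV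
end

section
/- Let q be a prime power and m, r, μ, ℓ positive integers. Let a = (a_1, …, a_ℓ) be a vector of nonzero elements of F_{q^m} that are pairwise non-conjugate with respect to σ(x) = x^q. Let β = (β_1, …, β_{μr}) ∈ F_{q^m}^{μr}, take β_1 = β_2 = ⋯ = β_ℓ = β as the blocks of evaluation points, set g = ℓμ, N = gr, and let 1 ≤ h ≤ N. For i = 1,…,μ define the F_q-linear subspace H_i = span_{F_q}{β_{(i−1)r+1}, β_{(i−1)r+2}, …, β_{ir}} ⊆ F_{q^m}. Then the extended Moore matrix M_h(a, β) ∈ F_{q^m}^{h×N} is an MSRD matrix for the length partition (g, r) over F_q if and only if the following two conditions hold: (1) dim_{F_q}(H_i) = r for all i = 1,…,μ (i.e., β_{(i−1)r+1},…,β_{ir} are linearly independent over F_q); and (2) H_i ∩ (Σ_{j∈Γ} H_j) = {0} for every i = 1,…,μ and every subset Γ ⊆ {1,…,μ} with i ∉ Γ and |Γ| ≤ min{h, μ} − 1. -/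
/-!
Write `σ = (·) ^ q`. Row `u` of the extended Moore matrix is `x ↦ σ^u(x) N_u(a)`, the `u`-th
power of the `F_q`-linear map `x ↦ σ(x) a`; hence right multiplication by `diag(A_1, …, A_g)`
only replaces the points of each block by `F_q`-linear combinations of them.

The key input is a theorem of Lam–Leroy type: Moore columns with coefficients `a_{s c}` at points
`b_c` are `K`-linearly independent as soon as, inside each class `s c = i`, the points are
`F_q`-linearly independent. Induct on the number of columns: applying `σ` to a relation and
subtracting a multiple of the original one gives a shorter relation on the points `σ(b_c) a_{s c}`;
non-conjugacy of the `a_i` then forces all coefficients into one class, with ratios fixed by `σ`,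
i.e. lying in `F_q`.

Conditions (1) and (2) together say that every `F_q`-relation among the `β_{j,k}` involving at most
`min h μ` blocks `j` is trivial. This makes the transformed points of every `h` columns independent
within each class, so the matrix is MSRD; conversely, a nontrivial such relation, written into the
columns of suitable invertible `A_i`, produces at most `h` dependent columns.
-/

/-- An `h × N` matrix over a field is MDS if every `h × h` submatrix formed by `h`
distinct columns is invertible. -/
def IsMDSMatrix {K : Type} [Field K] {h : ℕ} {ι : Type} [Fintype ι] [DecidableEq ι]
    (M : Matrix (Fin h) ι K) : Prop :=
  ∀ f : Fin h → ι, Function.Injective f → IsUnit (M.submatrix id f).det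

/-- The block-diagonal matrix over `K` built from `r × r` matrices over the subfield
`Fq`, one for each block index in `ι`. -/
def BlockDiag (Fq K : Type) [Field Fq] [Field K] [Algebra Fq K]
    {ι : Type} [DecidableEq ι] {r : ℕ}
    (A : ι → Matrix (Fin r) (Fin r) Fq) : Matrix (ι × Fin r) (ι × Fin r) K :=
  fun x y => if x.1 = y.1 then algebraMap Fq K (A x.1 x.2 y.2) else 0

/-- A matrix with columns partitioned into blocks of size `r` is an MSRD matrix for the
length partition `(g, r)` over `Fq` if it stays MDS after right multiplication by any
invertible block-diagonal matrix over `Fq`. -/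
def IsMSRDMatrix (Fq : Type) {K : Type} [Field Fq] [Field K] [Algebra Fq K]
    {h r : ℕ} {ι : Type} [Fintype ι] [DecidableEq ι]
    (M : Matrix (Fin h) (ι × Fin r) K) : Prop :=
  ∀ A : ι → Matrix (Fin r) (Fin r) Fq, (∀ b, IsUnit (A b).det) →
    IsMDSMatrix (M * BlockDiag Fq K A)

open Finset Function
open scoped Matrix

open Polynomial in
theorem FiniteField.mem_range_algebraMap_of_pow_card_eq_self {Fq K : Type*} [Field Fq]
    [Fintype Fq] [Field K] [Algebra Fq K] {x : K} (hx : x ^ Fintype.card Fq = x) :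
    x ∈ Set.range (algebraMap Fq K) := by
  have hprod : ∏ ε : Fq, (X - C ε) = (X ^ Fintype.card Fq - X : Fq[X]) := by
    have hmonic : (X ^ Fintype.card Fq - X : Fq[X]).Monic :=
      monic_X_pow_sub (by simpa using Fintype.one_lt_card)
    have := prod_multiset_X_sub_C_of_monic_of_roots_card_eq hmonic (by
      rw [roots_X_pow_card_sub_X, X_pow_card_sub_X_natDegree_eq _ Fintype.one_lt_card]
      simp)
    rwa [roots_X_pow_card_sub_X] at this
  have hzero := congrArg (aeval x) hprod
  simp only [map_prod, map_sub, aeval_X, aeval_C, map_pow, hx, sub_self] at hzero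
  obtain ⟨ε, -, hε⟩ := prod_eq_zero_iff.mp hzero
  exact ⟨ε, (sub_eq_zero.mp hε).symm⟩

lemma LinearIndepOn.eq_zero_of_sum_mul_eq_zero {R A C : Type*} [CommRing R] [Ring A]
    [Algebra R A] {b x : C → A} {S : Finset C} (hb : LinearIndepOn R b S)
    (hx : ∀ c ∈ S, x c ∈ Set.range (algebraMap R A)) (hsum : ∑ c ∈ S, x c * b c = 0) :
    ∀ c ∈ S, x c = 0 := by
  choose! ε hε using hx
  have hε₀ := linearIndepOn_finset_iff.mp hb ε (by
    rw [← hsum]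
    exact sum_congr rfl fun c hc => by rw [Algebra.smul_def, hε c hc])
  intro c hc
  rw [← hε c hc, hε₀ c hc, map_zero]

section SkewShift

variable {Fq K : Type*} [Field Fq] [Field K] [Algebra Fq K]

-- Its `u`-th power is `x ↦ σ^u(x) N_u(a)`, which gives row `u` of a Moore matrix.
def skewShift (σ : K →ₐ[Fq] K) (a : K) : Module.End Fq K :=
  LinearMap.mulRight Fq a ∘ₗ σ.toLinearMap

@[simp]
lemma skewShift_apply (σ : K →ₐ[Fq] K) (a x : K) : skewShift σ a x = σ x * a := rfl

lemma skewShift_pow_succ_apply (σ : K →ₐ[Fq] K) (a x : K) (u : ℕ) :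
    (skewShift σ a ^ (u + 1)) x = σ ((skewShift σ a ^ u) x) * a := by
  rw [pow_succ', Module.End.mul_apply, skewShift_apply]

lemma skewShift_injective (σ : K →ₐ[Fq] K) {a : K} (ha : a ≠ 0) :
    Injective (skewShift σ a) :=
  (mul_left_injective₀ ha).comp σ.toRingHom.injective

lemma skewShift_frobeniusAlgHom_pow_apply [Fintype Fq] (a x : K) (u : ℕ) :
    (skewShift (FiniteField.frobeniusAlgHom Fq K) a ^ u) x =
      x ^ Fintype.card Fq ^ u * a ^ ((Fintype.card Fq ^ u - 1) / (Fintype.card Fq - 1)) := by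
  set q := Fintype.card Fq
  rw [← Nat.geomSum_eq Fintype.one_lt_card]
  induction u with
  | zero => simp
  | succ u ih =>
    have hsum : ∑ k ∈ range (u + 1), q ^ k = (∑ k ∈ range u, q ^ k) * q + 1 := by
      simp only [sum_range_succ', pow_succ, sum_mul, pow_zero]
    rw [skewShift_pow_succ_apply, ih, FiniteField.coe_frobeniusAlgHom, hsum, pow_succ q u]
    ring

lemma sum_erase_mul_skewShift_pow_eq_zero {σ : K →ₐ[Fq] K} {ι C : Type*} [DecidableEq C]
    {a : ι → K} (ha : ∀ i, a i ≠ 0) (s : C → ι) (T : Finset C) (b x : C → K) (n : ℕ)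
    (hx : ∀ u < n + 1, ∑ c ∈ T, x c * (skewShift σ (a (s c)) ^ u) (b c) = 0) (c₀ : C) :
    ∀ u < n, ∑ c ∈ T.erase c₀,
      (x c₀ * (σ (x c) / a (s c)) - σ (x c₀) / a (s c₀) * x c) *
        (skewShift σ (a (s c)) ^ u) (skewShift σ (a (s c)) (b c)) = 0 := by
  have htwist : ∀ u < n + 1,
      ∑ c ∈ T, σ (x c) / a (s c) * (skewShift σ (a (s c)) ^ (u + 1)) (b c) = 0 := by
    intro u hu
    rw [← map_zero σ, ← hx u hu, map_sum]
    refine sum_congr rfl fun c _ => ?_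
    rw [skewShift_pow_succ_apply, map_mul]
    field_simp [ha (s c)]
  intro u hu
  rw [sum_erase _ (by simp [mul_comm])]
  simp only [← Module.End.mul_apply, ← pow_succ, sub_mul, sum_sub_distrib, mul_assoc,
    ← mul_sum, htwist u (by omega), hx (u + 1) (by omega), mul_zero, sub_zero]

end SkewShift

section LamLeroy

variable {Fq K : Type*} [Field Fq] [Field K] [Algebra Fq K] {σ : K →ₐ[Fq] K}
  {ι : Type*} {a : ι → K}

lemma eq_zero_or_fixed_of_twist_eq (ha : ∀ i, a i ≠ 0)
    (hconj : ∀ i i' (c : K), c ≠ 0 → σ c * a i = c * a i' → i = i')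
    {y y₀ : K} (hy₀ : y₀ ≠ 0) {i i₀ : ι}
    (h : y₀ * (σ y / a i) = σ y₀ / a i₀ * y) :
    y = 0 ∨ i = i₀ ∧ σ (y / y₀) = y / y₀ := by
  by_cases hy : y = 0
  · exact .inl hy
  have hσ₀ : σ y₀ ≠ 0 := (map_ne_zero σ).2 hy₀
  have hratio : σ (y / y₀) * a i₀ = y / y₀ * a i := by
    rw [map_div₀]
    field_simp [ha i, ha i₀] at h ⊢
    linear_combination h
  obtain rfl := (hconj _ _ _ (div_ne_zero hy hy₀) hratio).symm
  exact .inr ⟨rfl, mul_right_cancel₀ (ha i) hratio⟩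

variable (hfix : ∀ x, σ x = x → x ∈ Set.range (algebraMap Fq K)) (ha : ∀ i, a i ≠ 0)
  (hconj : ∀ i i' (c : K), c ≠ 0 → σ c * a i = c * a i' → i = i')
include hfix ha hconj

theorem eq_zero_of_sum_mul_skewShift_pow_eq_zero {C : Type*} (s : C → ι) (n : ℕ)
    (T : Finset C) (hT : #T ≤ n) (b x : C → K)
    (hb : ∀ i, LinearIndepOn Fq b {c | c ∈ T ∧ s c = i})
    (hx : ∀ u < n, ∑ c ∈ T, x c * (skewShift σ (a (s c)) ^ u) (b c) = 0) :
    ∀ c ∈ T, x c = 0 := by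
  classical
  induction n generalizing T b x with
  | zero => simp_all
  | succ n ih =>
    by_contra! hne
    obtain ⟨c₀, hc₀T, hc₀⟩ := hne
    have hy_indep : ∀ i, LinearIndepOn Fq (fun c => skewShift σ (a (s c)) (b c))
        {c | c ∈ T.erase c₀ ∧ s c = i} := fun i =>
      (((hb i).map_injOn _ (skewShift_injective σ (ha i)).injOn).congr
        (by rintro c ⟨-, rfl⟩; rfl)).mono (by rintro c ⟨hc, rfl⟩; exact ⟨mem_of_mem_erase hc, rfl⟩)
    have hy := ih (T.erase c₀) (by rw [card_erase_of_mem hc₀T]; omega) _ _ hy_indep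
      (sum_erase_mul_skewShift_pow_eq_zero ha s T b x n hx c₀)
    have hcases : ∀ c ∈ T, x c = 0 ∨ s c = s c₀ ∧ σ (x c / x c₀) = x c / x c₀ := by
      intro c hc
      obtain rfl | hcc₀ := eq_or_ne c c₀
      · simp [div_self hc₀]
      exact eq_zero_or_fixed_of_twist_eq ha hconj hc₀
        (sub_eq_zero.mp (hy c (mem_erase.2 ⟨hcc₀, hc⟩)))
    have hclass : ∀ c ∈ T, x c ≠ 0 → s c = s c₀ := fun c hc hxc =>
      ((hcases c hc).resolve_left hxc).1
    have h₀ := hx 0 n.succ_pos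
    simp only [pow_zero, Module.End.one_apply] at h₀
    have hsum : ∑ c ∈ T with s c = s c₀, x c / x c₀ * b c = 0 := by
      rw [sum_filter_of_ne fun c hc hne => hclass c hc fun hxc => hne (by simp [hxc])]
      simp only [div_eq_inv_mul, mul_assoc, ← mul_sum, h₀, mul_zero]
    have hindep := hb (s c₀)
    rw [show {c | c ∈ T ∧ s c = s c₀} = ↑{c ∈ T | s c = s c₀} by ext; simp] at hindep
    have := hindep.eq_zero_of_sum_mul_eq_zero (fun c hc => hfix _ <|
      (hcases c (mem_filter.1 hc).1).elim (fun h => by simp [h]) And.right) hsum c₀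
      (mem_filter.2 ⟨hc₀T, rfl⟩)
    simp [div_self hc₀] at this

variable (σ) in
def mooreCol (h : ℕ) (a : K) : K →ₗ[Fq] Fin h → K :=
  LinearMap.pi fun u => skewShift σ a ^ (u : ℕ)

theorem linearIndepOn_mooreCol {C : Type*} (s : C → ι) (b : C → K) {h : ℕ} (T : Finset C)
    (hT : #T ≤ h) (hb : ∀ i, LinearIndepOn Fq b {c | c ∈ T ∧ s c = i}) :
    LinearIndepOn K (fun c => mooreCol σ h (a (s c)) (b c)) T := by
  rw [linearIndepOn_finset_iff]
  intro x hx
  refine eq_zero_of_sum_mul_skewShift_pow_eq_zero hfix ha hconj s h T hT b x hb fun u hu => ?_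
  simpa [mooreCol, Finset.sum_apply] using congrFun hx ⟨u, hu⟩

end LamLeroy

theorem Finset.exists_injective_fin_superset {ι : Type*} [Fintype ι] {h : ℕ} (T : Finset ι)
    (hT : #T ≤ h) (hh : h ≤ Fintype.card ι) :
    ∃ f : Fin h → ι, Injective f ∧ ↑T ⊆ Set.range f := by
  obtain ⟨T', hTT', hT'⟩ := exists_superset_card_eq hT hh
  let e := Fintype.equivFinOfCardEq (by simpa using hT' : Fintype.card T' = h)
  refine ⟨fun v => e.symm v, Subtype.val_injective.comp e.symm.injective, fun c hc => ?_⟩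
  exact ⟨e ⟨c, hTT' hc⟩, by simp⟩

theorem isMDSMatrix_iff_linearIndepOn_col {K : Type} [Field K] {h : ℕ} {ι : Type} [Fintype ι]
    [DecidableEq ι] (M : Matrix (Fin h) ι K) (hh : h ≤ Fintype.card ι) :
    IsMDSMatrix M ↔ ∀ T : Finset ι, #T ≤ h → LinearIndepOn K M.col T := by
  have key : ∀ f : Fin h → ι, Injective f →
      (IsUnit (M.submatrix id f).det ↔ LinearIndepOn K M.col (Set.range f)) := fun f hf => by
    rw [linearIndepOn_range_iff hf, ← Matrix.isUnit_iff_isUnit_det,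
      ← Matrix.linearIndependent_cols_iff_isUnit]
    rfl
  refine ⟨fun hM T hT => ?_, fun hM f hf => (key f hf).2 ?_⟩
  · obtain ⟨f, hf, hTf⟩ := T.exists_injective_fin_superset hT hh
    exact ((key f hf).1 (hM f hf)).mono hTf
  · simpa using hM (univ.image f) (card_image_le.trans (by simp))

section Blocks

variable {F V : Type*} [Field F] [AddCommGroup V] [Module F V] {κ : Type*} [Fintype κ] {r : ℕ}

variable (F) in
open Classical in
def LinearIndependentOnBlocks (n : ℕ) (β : κ → Fin r → V) : Prop :=
  ∀ g : κ → Fin r → F, #{j | g j ≠ 0} ≤ n → ∑ j, ∑ k, g j k • β j k = 0 → g = 0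

lemma sum_mulVec_smul (B : Matrix (Fin r) (Fin r) F) (v : Fin r → F) (w : Fin r → V) :
    ∑ k', (B *ᵥ v) k' • w k' = ∑ k, v k • ∑ k', B k' k • w k' := by
  simp only [Matrix.mulVec, dotProduct, sum_smul, smul_sum, mul_smul, mul_comm (B _ _)]
  exact sum_comm

theorem LinearIndependentOnBlocks.blockTransform {n : ℕ} {β : κ → Fin r → V}
    (hβ : LinearIndependentOnBlocks F n β) {B : κ → Matrix (Fin r) (Fin r) F}
    (hB : ∀ j, IsUnit (B j).det) :
    LinearIndependentOnBlocks F n fun j k => ∑ k', B j k' k • β j k' := by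
  classical
  intro g hg hrel
  have hinj : ∀ j, Injective (B j).mulVec := fun j =>
    Matrix.mulVec_injective_iff_isUnit.2 ((Matrix.isUnit_iff_isUnit_det _).2 (hB j))
  have hBg := hβ (fun j => B j *ᵥ g j) ((card_le_card fun j => by
      simp only [mem_filter, mem_univ, true_and]
      exact mt fun hj => by rw [hj, Matrix.mulVec_zero]).trans hg)
    (by simpa only [sum_mulVec_smul] using hrel)
  funext j
  exact hinj j ((congrFun hBg j).trans (Matrix.mulVec_zero _).symm)

theorem LinearIndependentOnBlocks.linearIndepOn {n : ℕ} {β : κ → Fin r → V}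
    (hβ : LinearIndependentOnBlocks F n β) {T : Finset (κ × Fin r)} (hT : #T ≤ n) :
    LinearIndepOn F (fun p : κ × Fin r => β p.1 p.2) T := by
  classical
  rw [linearIndepOn_finset_iff]
  intro ε hε p hp
  let g : κ → Fin r → F := fun j k => if (j, k) ∈ T then ε (j, k) else 0
  have hg : #{j | g j ≠ 0} ≤ n := by
    refine (card_le_card fun j hj => ?_).trans
      ((card_image_le (s := T) (f := Prod.fst)).trans hT)
    obtain ⟨k, hk⟩ := Function.ne_iff.mp (mem_filter.mp hj).2
    exact mem_image.2 ⟨(j, k), by_contra fun h => hk (if_neg h), rfl⟩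
  have hrel : ∑ j, ∑ k, g j k • β j k = 0 := by
    rw [← hε, ← Fintype.sum_prod_type' (f := fun j k => g j k • β j k)]
    simp only [g, ite_smul, zero_smul]
    rw [sum_ite_mem, univ_inter]
  simpa [g, hp] using congrFun (congrFun (hβ g hg hrel) p.1) p.2

open Classical in
lemma linearIndependentOnBlocks_min_card_iff (β : κ → Fin r → V) (n : ℕ) :
    LinearIndependentOnBlocks F (min n (Fintype.card κ)) β ↔ LinearIndependentOnBlocks F n β := by
  simp only [LinearIndependentOnBlocks, le_min_iff, card_le_univ, and_true]

end Blocks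

section Subspaces

variable {F V : Type*} [Field F] [AddCommGroup V] [Module F V] {κ : Type*} [Fintype κ] {r : ℕ}

open Classical in
theorem forall_inf_iSup_eq_bot_iff (H : κ → Submodule F V) {n : ℕ} (hn : 1 ≤ n) :
    (∀ i (Γ : Finset κ), i ∉ Γ → #Γ ≤ n - 1 → H i ⊓ (⨆ j ∈ Γ, H j) = ⊥) ↔
      ∀ w : κ → V, (∀ j, w j ∈ H j) → #{j | w j ≠ 0} ≤ n → ∑ j, w j = 0 → w = 0 := by
  constructor
  · intro hH w hw hcard hsum
    by_contra hne
    obtain ⟨j, hj⟩ := Function.ne_iff.mp hne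
    set S : Finset κ := {j | w j ≠ 0}
    have hjS : j ∈ S := mem_filter.2 ⟨mem_univ _, hj⟩
    have hwj : w j = -∑ j' ∈ S.erase j, w j' := by
      rw [eq_neg_iff_add_eq_zero, add_sum_erase _ _ hjS, sum_filter_ne_zero, hsum]
    have hΓ := hH j _ (notMem_erase j _) (by rw [card_erase_of_mem hjS]; omega)
    refine hj ((Submodule.mem_bot F).mp (hΓ ▸ Submodule.mem_inf.2 ⟨hw j, ?_⟩))
    rw [hwj]
    exact neg_mem (Submodule.sum_mem_biSup fun j' _ => hw j')
  · intro hw i Γ hiΓ hΓ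
    refine (Submodule.eq_bot_iff _).2 fun x hx => ?_
    obtain ⟨hxi, hxΓ⟩ := Submodule.mem_inf.1 hx
    obtain ⟨y, rfl⟩ := (Submodule.mem_iSup_finset_iff_exists_sum H _).1 hxΓ
    let w : κ → V := fun j => if j ∈ Γ then y j else if j = i then -∑ j ∈ Γ, (y j : V) else 0
    have hw_mem : ∀ j, w j ∈ H j := by
      intro j
      by_cases hjΓ : j ∈ Γ
      · simp [w, hjΓ]
      by_cases hji : j = i
      · subst hji
        simpa [w, hjΓ] using hxi
      · simp [w, hjΓ, hji]
    have hcard : #{j | w j ≠ 0} ≤ n := by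
      refine (card_le_card fun j hj => ?_).trans ((card_insert_le i Γ).trans (by omega))
      by_contra hjΓ
      simp only [mem_insert, not_or] at hjΓ
      simp [w, hjΓ.1, hjΓ.2] at hj
    have hsum : ∑ j, w j = 0 := by
      simp [w, sum_ite, sum_ite_eq', hiΓ]
    have := congrFun (hw w hw_mem hcard hsum) i
    simpa [w, hiΓ] using this

theorem subspace_conditions_iff_linearIndependentOnBlocks (β : κ → Fin r → V) {n : ℕ}
    (hn : 1 ≤ n) :
    ((∀ i, Module.finrank F (Submodule.span F (Set.range (β i))) = r) ∧
      ∀ i (Γ : Finset κ), i ∉ Γ → #Γ ≤ n - 1 →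
        Submodule.span F (Set.range (β i)) ⊓ (⨆ j ∈ Γ, Submodule.span F (Set.range (β j))) = ⊥) ↔
      LinearIndependentOnBlocks F n β := by
  classical
  have hrank : ∀ i, Module.finrank F (Submodule.span F (Set.range (β i))) = r ↔
      LinearIndependent F (β i) := fun i => by
    rw [linearIndependent_iff_card_eq_finrank_span, Fintype.card_fin, eq_comm]
    rfl
  simp_rw [hrank, forall_inf_iSup_eq_bot_iff _ hn]
  constructor
  · rintro ⟨hli, hw⟩ g hg hrel
    have hw0 := hw (fun j => ∑ k, g j k • β j k)
      (fun j => sum_mem fun k _ => Submodule.smul_mem _ _ (Submodule.subset_span ⟨k, rfl⟩))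
      ((card_le_card fun j => by
        simp only [mem_filter, mem_univ, true_and]
        exact mt fun hgj => by simp [hgj]).trans hg) hrel
    funext j k
    exact Fintype.linearIndependent_iff.mp (hli j) (g j) (congrFun hw0 j) k
  · intro hβ
    have hli : ∀ i, LinearIndependent F (β i) := fun i =>
      Fintype.linearIndependent_iff.mpr fun c hc k => by
        have hsingle := hβ (Pi.single i c)
          ((card_le_card (t := {i}) fun j => by
            simp only [mem_filter, mem_univ, true_and, mem_singleton]
            exact not_imp_comm.mp fun hji => by simp [hji]).trans
            (by simpa using hn))
          (by rw [Fintype.sum_eq_single i fun j hj => by simp [Pi.single_eq_of_ne hj]]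
              simpa using hc)
        simpa using congrFun (congrFun hsingle i) k
    refine ⟨hli, fun w hw hcard hsum => ?_⟩
    choose g hg using fun j => (Submodule.mem_span_range_iff_exists_fun F).mp (hw j)
    have hg0 := hβ g ((card_le_card fun j => by
      simp only [mem_filter, mem_univ, true_and]
      exact mt fun hwj => funext (Fintype.linearIndependent_iff.mp (hli j) (g j)
        ((hg j).trans hwj))).trans hcard) (by simpa [hg] using hsum)
    funext j
    rw [← hg j, hg0]
    simp

end Subspaces

section ExtendedMoore

variable {Fq K : Type} [Field Fq] [Field K] [Algebra Fq K] {ι κ : Type} {r : ℕ}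

lemma mul_blockDiag_apply [Fintype ι] [DecidableEq ι] {m : Type} (M : Matrix m (ι × Fin r) K)
    (A : ι → Matrix (Fin r) (Fin r) Fq) (u : m) (c : ι × Fin r) :
    (M * BlockDiag Fq K A) u c = ∑ k, M u (c.1, k) * algebraMap Fq K (A c.1 k c.2) := by
  simp [Matrix.mul_apply, BlockDiag, Fintype.sum_prod_type]

variable (σ : K →ₐ[Fq] K)

def extendedMoore (h : ℕ) (a : ι → K) (β : κ → Fin r → K) :
    Matrix (Fin h) ((ι × κ) × Fin r) K :=
  Matrix.of fun u c => mooreCol σ h (a c.1.1) (β c.1.2 c.2) u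

lemma col_extendedMoore_mul_blockDiag [Fintype ι] [DecidableEq ι] [Fintype κ] [DecidableEq κ]
    (h : ℕ) (a : ι → K) (β : κ → Fin r → K) (A : ι × κ → Matrix (Fin r) (Fin r) Fq) :
    (extendedMoore σ h a β * BlockDiag Fq K A).col =
      fun c => mooreCol σ h (a c.1.1) (∑ k, A c.1 k c.2 • β c.1.2 k) := by
  ext c u
  simp only [Matrix.col_apply, mul_blockDiag_apply, map_sum, map_smul, Finset.sum_apply]
  simp [extendedMoore, mooreCol, Algebra.smul_def, mul_comm]

end ExtendedMoore

section MSRD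

variable {Fq K : Type} [Field Fq] [Field K] [Algebra Fq K] {σ : K →ₐ[Fq] K}
  {ι κ : Type} [Fintype ι] [DecidableEq ι] [Fintype κ] [DecidableEq κ] {r h : ℕ}
  {a : ι → K} {β : κ → Fin r → K}

theorem isMSRDMatrix_extendedMoore (hfix : ∀ x, σ x = x → x ∈ Set.range (algebraMap Fq K))
    (ha : ∀ i, a i ≠ 0) (hconj : ∀ i i' (c : K), c ≠ 0 → σ c * a i = c * a i' → i = i')
    (hh : h ≤ Fintype.card ((ι × κ) × Fin r)) (hβ : LinearIndependentOnBlocks Fq h β) :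
    IsMSRDMatrix Fq (extendedMoore σ h a β) := by
  intro A hA
  rw [isMDSMatrix_iff_linearIndepOn_col _ hh, col_extendedMoore_mul_blockDiag]
  intro T hT
  refine linearIndepOn_mooreCol hfix ha hconj (fun c : (ι × κ) × Fin r => c.1.1) _ T hT
    fun i => ?_
  let e : κ × Fin r → (ι × κ) × Fin r := fun p => ((i, p.1), p.2)
  have he : Injective e := fun p q hpq => by simpa [e, Prod.ext_iff] using hpq
  have hTi : {c | c ∈ T ∧ c.1.1 = i} = e '' ↑({p | e p ∈ T} : Finset (κ × Fin r)) := by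
    ext ⟨⟨i', j⟩, k⟩
    simp only [Set.mem_ofPred_eq, coe_filter, mem_univ, true_and, Set.mem_image, e]
    constructor
    · rintro ⟨hc, rfl⟩
      exact ⟨(j, k), hc, rfl⟩
    · rintro ⟨p, hp, hpe⟩
      simp only [Prod.ext_iff] at hpe
      obtain ⟨⟨rfl, rfl⟩, rfl⟩ := hpe
      exact ⟨hp, rfl⟩
  rw [hTi]
  exact LinearIndepOn.image_of_comp e _ ((hβ.blockTransform fun j => hA (i, j)).linearIndepOn
    ((card_le_card_of_injOn e (fun p hp => by simpa using hp) he.injOn).trans hT))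

theorem linearIndependentOnBlocks_of_isMSRDMatrix_extendedMoore [Nonempty ι]
    (hh : h ≤ Fintype.card ((ι × κ) × Fin r)) (hM : IsMSRDMatrix Fq (extendedMoore σ h a β)) :
    LinearIndependentOnBlocks Fq h β := by
  classical
  intro g hg hrel
  by_contra hg₀
  obtain ⟨j₀, k₀, hjk₀⟩ : ∃ j k, g j k ≠ 0 := by simpa [funext_iff] using hg₀
  obtain ⟨i₀⟩ := ‹Nonempty ι›
  have hB : ∀ j, ∃ (B : Matrix (Fin r) (Fin r) Fq) (k : Fin r),
      IsUnit B.det ∧ (g j ≠ 0 → ∀ k', B k' k = g j k') := by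
    intro j
    by_cases hj : g j = 0
    · exact ⟨1, k₀, by simp, fun h => (h hj).elim⟩
    obtain ⟨k, hk⟩ := Function.ne_iff.mp hj
    refine ⟨(1 : Matrix (Fin r) (Fin r) Fq).updateCol k (g j), k, ?_, fun _ k' => by simp⟩
    rwa [← Matrix.cramer_apply, Matrix.cramer_one, isUnit_iff_ne_zero]
  choose B k hBdet hBcol using hB
  let e : κ → (ι × κ) × Fin r := fun j => ((i₀, j), k j)
  have he : Injective e := fun j j' hjj' => congrArg (fun c => c.1.2) hjj'
  have hind := (isMDSMatrix_iff_linearIndepOn_col _ hh).mp (hM (fun b => B b.2) fun b => hBdet _)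
    (image e {j | g j ≠ 0}) (card_image_le.trans hg)
  rw [coe_image, col_extendedMoore_mul_blockDiag] at hind
  have hsum : ∑ j ∈ {j | g j ≠ 0}, (1 : K) • mooreCol σ h (a i₀)
      (∑ k', B j k' (k j) • β j k') = 0 := by
    rw [sum_congr rfl fun j hj => by rw [one_smul, sum_congr rfl fun k' _ => by
      rw [hBcol j (mem_filter.mp hj).2 k']], ← map_sum,
      sum_filter_of_ne fun j _ hj => mt (fun h => by simp [h]) hj, hrel, map_zero]
  have := linearIndepOn_finset_iff.mp (hind.comp_of_image he.injOn) (fun _ => 1) hsum j₀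
    (mem_filter.2 ⟨mem_univ _, Function.ne_iff.2 ⟨k₀, hjk₀⟩⟩)
  exact one_ne_zero this

theorem isMSRDMatrix_extendedMoore_iff [Nonempty ι]
    (hfix : ∀ x, σ x = x → x ∈ Set.range (algebraMap Fq K))
    (ha : ∀ i, a i ≠ 0) (hconj : ∀ i i' (c : K), c ≠ 0 → σ c * a i = c * a i' → i = i')
    (hh : h ≤ Fintype.card ((ι × κ) × Fin r)) :
    IsMSRDMatrix Fq (extendedMoore σ h a β) ↔ LinearIndependentOnBlocks Fq h β :=
  ⟨linearIndependentOnBlocks_of_isMSRDMatrix_extendedMoore hh,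
    isMSRDMatrix_extendedMoore hfix ha hconj hh⟩

end MSRD

theorem extended_moore_isMSRD_iff_subspace_conditions_general
    (q r μ ℓ : ℕ)
    (hμ : 0 < μ) (hℓ : 0 < ℓ)
    (Fq K : Type) [Field Fq] [Field K] [Fintype Fq] [Algebra Fq K]
    (hcardFq : Fintype.card Fq = q)
    (a : Fin ℓ → K) (ha : ∀ i, a i ≠ 0)
    (hconj : ∀ i i' : Fin ℓ, i ≠ i' →
      ¬ ∃ c : K, c ≠ 0 ∧ a i' = c ^ (q - 1) * a i)
    (β : Fin μ → Fin r → K)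
    (h : ℕ) (hh1 : 1 ≤ h) (hh2 : h ≤ ℓ * μ * r)
    (M : Matrix (Fin h) ((Fin ℓ × Fin μ) × Fin r) K)
    (hM : ∀ (u : Fin h) (c : (Fin ℓ × Fin μ) × Fin r),
      M u c = β c.1.2 c.2 ^ q ^ (u : ℕ) *
        a c.1.1 ^ ((q ^ (u : ℕ) - 1) / (q - 1)))
    (H : Fin μ → Submodule Fq K)
    (hH : ∀ i, H i = Submodule.span Fq (Set.range (β i))) :
    IsMSRDMatrix Fq M ↔
      ((∀ i, Module.finrank Fq ↥(H i) = r) ∧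
        ∀ (i : Fin μ) (Γ : Finset (Fin μ)), i ∉ Γ → Γ.card ≤ min h μ - 1 →
          H i ⊓ (⨆ j ∈ Γ, H j) = ⊥) := by
  subst hcardFq
  have : Nonempty (Fin ℓ) := ⟨⟨0, hℓ⟩⟩
  set σ := FiniteField.frobeniusAlgHom Fq K
  obtain rfl : M = extendedMoore σ h a β := by
    ext u c
    simp [hM, extendedMoore, mooreCol, σ, skewShift_frobeniusAlgHom_pow_apply]
  obtain rfl : H = fun i => Submodule.span Fq (Set.range (β i)) := funext hH
  have hconj' : ∀ i i' (c : K), c ≠ 0 → σ c * a i = c * a i' → i = i' := by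
    intro i i' c hc hσc
    by_contra hne
    refine hconj i i' hne ⟨c, hc, mul_left_cancel₀ hc ?_⟩
    rw [← hσc, FiniteField.coe_frobeniusAlgHom, ← mul_assoc, ← pow_succ',
      Nat.sub_add_cancel Fintype.card_pos]
  rw [isMSRDMatrix_extendedMoore_iff
      (fun _ => FiniteField.mem_range_algebraMap_of_pow_card_eq_self) ha hconj'
      (by simpa using hh2),
    subspace_conditions_iff_linearIndependentOnBlocks β (le_min hh1 hμ),
    ← linearIndependentOnBlocks_min_card_iff, Fintype.card_fin]

/-- With all blocks of evaluation points equal to `β`, the extended Moore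
matrix is MSRD for the length partition `(ℓμ, r)` over `F_q` iff (1) each subspace
`H_i = span_{F_q}(β_{(i-1)r+1},…,β_{ir})` has dimension `r`, and (2) each `H_i`
intersects trivially any sum of at most `min{h,μ} - 1` of the other subspaces. -/
theorem extended_moore_isMSRD_iff_subspace_conditions
    (q m r μ ℓ : ℕ) (hq : IsPrimePow q) (hm : 0 < m) (hr : 0 < r)
    (hμ : 0 < μ) (hℓ : 0 < ℓ)
    (Fq K : Type) [Field Fq] [Field K] [Fintype Fq] [Fintype K] [Algebra Fq K]
    (hcardFq : Fintype.card Fq = q) (hcardK : Fintype.card K = q ^ m)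
    (a : Fin ℓ → K) (ha : ∀ i, a i ≠ 0)
    (hconj : ∀ i i' : Fin ℓ, i ≠ i' →
      ¬ ∃ c : K, c ≠ 0 ∧ a i' = c ^ (q - 1) * a i)
    (β : Fin μ → Fin r → K)
    (h : ℕ) (hh1 : 1 ≤ h) (hh2 : h ≤ ℓ * μ * r)
    (M : Matrix (Fin h) ((Fin ℓ × Fin μ) × Fin r) K)
    (hM : ∀ (u : Fin h) (c : (Fin ℓ × Fin μ) × Fin r),
      M u c = β c.1.2 c.2 ^ q ^ (u : ℕ) *
        a c.1.1 ^ ((q ^ (u : ℕ) - 1) / (q - 1)))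
    (H : Fin μ → Submodule Fq K)
    (hH : ∀ i, H i = Submodule.span Fq (Set.range (β i))) :
    IsMSRDMatrix Fq M ↔
      ((∀ i, Module.finrank Fq ↥(H i) = r) ∧
        ∀ (i : Fin μ) (Γ : Finset (Fin μ)), i ∉ Γ → Γ.card ≤ min h μ - 1 →
          H i ⊓ (⨆ j ∈ Γ, H j) = ⊥) :=
  extended_moore_isMSRD_iff_subspace_conditions_general q r μ ℓ hμ hℓ Fq K hcardFq a ha hconj β h
    hh1 hh2 M hM H hH
end

section
/- Let q be a prime power, m, r, g, M positive integers, and let C ⊆ F_{q^m}^{gr} be an F_{q^m}-linear code with C ≠ {0}. Let C ⊗ F_{q^{mM}} ⊆ F_{q^{mM}}^{gr} denote the F_{q^{mM}}-linear span of C inside F_{q^{mM}}^{gr} (via the field extension F_{q^m} ⊆ F_{q^{mM}}). Then: (i) dim_{F_{q^{mM}}}(C ⊗ F_{q^{mM}}) = dim_{F_{q^m}}(C); (ii) the minimum sum-rank distance of C ⊗ F_{q^{mM}} for the length partition (g,r) over F_q equals the minimum sum-rank distance of C for the length partition (g,r) over F_q; and (iii) C is MSRD for the length partition (g,r) over F_q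 if and only if C ⊗ F_{q^{mM}} is MSRD for the length partition (g,r) over F_q. -/
/-- The sum-rank weight of a vector partitioned into blocks of length `r`, over the base
field `Fq`: the sum over blocks of the `Fq`-dimension of the span of the block entries. -/
noncomputable def wtSR (Fq : Type) {L : Type} [Field Fq] [Field L] [Algebra Fq L]
    {ι : Type} [Fintype ι] {r : ℕ} (c : ι × Fin r → L) : ℕ :=
  ∑ i : ι, Module.finrank Fq
    ↥(Submodule.span Fq (Set.range fun j : Fin r => c (i, j)))

/-- The minimum sum-rank distance of a code (a set of vectors), over the base field
`Fq`, for blocks of length `r`. -/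
noncomputable def dSR (Fq : Type) {L : Type} [Field Fq] [Field L] [Algebra Fq L]
    {ι : Type} [Fintype ι] {r : ℕ} (C : Set (ι × Fin r → L)) : ℕ :=
  sInf {w | ∃ c ∈ C, ∃ d ∈ C, c ≠ d ∧ wtSR Fq (c - d) = w}

/-! Apply a functional `φ : L →ₗ[K] K` to every entry of a vector. As the codewords of `C` have
entries in `K`, this sends `a • c` to `φ a • c`, so it maps the `L`-span of `C` back into `C`. It
is `F_q`-linear, hence does not increase the sum-rank weight, and for a suitable `φ` it does not
kill a given nonzero vector. Thus every nonzero word of the extended code dominates a nonzero word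
of `C`, and the minimum distances agree. The same computation turns `K`-linear independence of
codewords into `L`-linear independence, which gives the dimension; the MSRD equivalence is then
arithmetic with `|C| = |K| ^ dim C`. -/

open Module Submodule

section ExtensionOfScalars

variable {K L n : Type*} [Field K] [Field L] [Algebra K L]

variable (n) in
def entrywiseCoord (φ : Dual K L) : (n → L) →ₗ[K] n → L :=
  (Algebra.linearMap K L ∘ₗ φ).compLeft n

theorem entrywiseCoord_smul (φ : Dual K L) (a : L) {c : n → L}
    (hc : ∀ x, c x ∈ Set.range (algebraMap K L)) :
    entrywiseCoord n φ (a • c) = φ a • c := by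
  funext x
  obtain ⟨w, hw⟩ := hc x
  simp only [entrywiseCoord, LinearMap.compLeft_apply, Function.comp_apply, Pi.smul_apply,
    LinearMap.coe_comp, Algebra.linearMap_apply, ← hw, smul_eq_mul]
  rw [mul_comm, ← Algebra.smul_def, map_smul, smul_eq_mul, map_mul, mul_comm, Algebra.smul_def]

theorem entrywiseCoord_mem_of_mem_span {C : Submodule K (n → L)}
    (hC : ∀ c ∈ C, ∀ x, c x ∈ Set.range (algebraMap K L)) {e : n → L}
    (he : e ∈ span L (C : Set (n → L))) (φ : Dual K L) : entrywiseCoord n φ e ∈ C := by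
  -- `φ` is generalized because `φ ∘ (a * ·)` is again a functional.
  induction he using span_induction generalizing φ with
  | mem c hc =>
    rw [← one_smul L c, entrywiseCoord_smul φ 1 (hC c hc)]
    exact C.smul_mem (φ 1) hc
  | zero => simp
  | add e e' _ _ he he' => simpa using C.add_mem (he φ) (he' φ)
  | smul a e _ he => exact he (φ ∘ₗ LinearMap.mulLeft K a)

theorem exists_entrywiseCoord_ne_zero {e : n → L} (he : e ≠ 0) :
    ∃ φ : Dual K L, entrywiseCoord n φ e ≠ 0 := by
  obtain ⟨x, hx⟩ := Function.ne_iff.mp he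
  obtain ⟨φ, hφ⟩ : ∃ φ : Dual K L, φ (e x) ≠ 0 := by
    simpa using (forall_dual_apply_eq_zero_iff K (e x)).not.mpr hx
  exact ⟨φ, fun h => hφ (by simpa [entrywiseCoord] using congrFun h x)⟩

theorem LinearIndependent.extendScalars_of_forall_mem_range {ι : Type*} {v : ι → n → L}
    (hv : ∀ i x, v i x ∈ Set.range (algebraMap K L)) (hli : LinearIndependent K v) :
    LinearIndependent L v := by
  rw [linearIndependent_iff'] at hli ⊢
  intro s g hsum i hi
  refine (forall_dual_apply_eq_zero_iff K (g i)).mp fun φ => hli s (φ ∘ g) ?_ i hi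
  simpa [map_sum, entrywiseCoord_smul _ _ (hv _)] using congrArg (entrywiseCoord n φ) hsum

theorem rank_span_eq_rank_of_forall_mem_range {C : Submodule K (n → L)}
    (hC : ∀ c ∈ C, ∀ x, c x ∈ Set.range (algebraMap K L)) :
    Module.rank L (span L (C : Set (n → L))) = Module.rank K C := by
  let b := Free.chooseBasis K C
  have hK : LinearIndependent K (C.subtype ∘ b) :=
    b.linearIndependent.map' C.subtype C.ker_subtype
  have hspan : span K (Set.range (C.subtype ∘ b)) = C := by
    rw [Set.range_comp, span_image, b.span_eq, Submodule.map_top, range_subtype]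
  have hL : LinearIndependent L (C.subtype ∘ b) :=
    hK.extendScalars_of_forall_mem_range fun i => hC _ (b i).2
  rw [← hspan, span_span_of_tower, rank_span hL, rank_span hK]

theorem finrank_span_eq_finrank_of_forall_mem_range {C : Submodule K (n → L)}
    (hC : ∀ c ∈ C, ∀ x, c x ∈ Set.range (algebraMap K L)) :
    finrank L (span L (C : Set (n → L))) = finrank K C :=
  congrArg Cardinal.toNat (rank_span_eq_rank_of_forall_mem_range hC)

end ExtensionOfScalars

section SumRank

variable {L : Type} [Field L] {ι : Type} [Fintype ι] {r : ℕ}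

theorem wtSR_comp_le {Fq L' : Type} [Field Fq] [Algebra Fq L] [Field L'] [Algebra Fq L']
    (ψ : L →ₗ[Fq] L') (c : ι × Fin r → L) : wtSR Fq (ψ ∘ c) ≤ wtSR Fq c := by
  refine Finset.sum_le_sum fun i _ => ?_
  have : (Set.range fun j => (ψ ∘ c) (i, j)) = ψ '' Set.range fun j => c (i, j) :=
    Set.range_comp ψ _
  rw [this, ← map_span]
  have := Module.Finite.span_of_finite Fq (Set.finite_range fun j => c (i, j))
  exact finrank_map_le ψ _

theorem dSR_span_eq_of_forall_mem_range (Fq : Type) {K : Type} [Field Fq] [Field K]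
    [Algebra K L] [Algebra Fq K] [Algebra Fq L] [IsScalarTower Fq K L]
    {C : Submodule K (ι × Fin r → L)} (hC : ∀ c ∈ C, ∀ x, c x ∈ Set.range (algebraMap K L)) :
    dSR Fq (span L (C : Set (ι × Fin r → L)) : Set (ι × Fin r → L)) =
      dSR Fq (C : Set (ι × Fin r → L)) := by
  refine csInf_eq_csInf_of_forall_exists_le ?_ ?_
  · rintro _ ⟨c, hc, d, hd, hcd, rfl⟩
    obtain ⟨φ, hφ⟩ := exists_entrywiseCoord_ne_zero (K := K) (sub_ne_zero.mpr hcd)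
    refine ⟨_, ⟨_, entrywiseCoord_mem_of_mem_span hC (sub_mem hc hd) φ, 0, C.zero_mem, hφ, rfl⟩, ?_⟩
    rw [sub_zero]
    exact wtSR_comp_le ((Algebra.linearMap K L ∘ₗ φ).restrictScalars Fq) (c - d)
  · rintro _ ⟨c, hc, d, hd, hcd, rfl⟩
    exact ⟨_, ⟨c, subset_span hc, d, subset_span hd, hcd, rfl⟩, le_rfl⟩

end SumRank

theorem extend_scalars_preserves_MSRD_general
    (q m M g r : ℕ)
    (Fq Fm L : Type) [Field Fq] [Field Fm] [Field L]
    [Fintype Fm] [Fintype L]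
    [Algebra Fq Fm] [Algebra Fm L] [Algebra Fq L] [IsScalarTower Fq Fm L]
    (hcm : Fintype.card Fm = q ^ m)
    (hcL : Fintype.card L = q ^ (m * M))
    (C : Submodule Fm (Fin g × Fin r → L))
    (hCval : ∀ c ∈ C, ∀ x, c x ∈ Set.range (algebraMap Fm L)) :
    Module.finrank L ↥(Submodule.span L (C : Set (Fin g × Fin r → L)))
        = Module.finrank Fm ↥C ∧
    dSR Fq ((Submodule.span L (C : Set (Fin g × Fin r → L)) :
        Submodule L (Fin g × Fin r → L)) : Set (Fin g × Fin r → L))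
        = dSR Fq (C : Set (Fin g × Fin r → L)) ∧
    (Nat.card ↥C
        = (q ^ m) ^ (g * r - dSR Fq (C : Set (Fin g × Fin r → L)) + 1) ↔
      Nat.card ↥(Submodule.span L (C : Set (Fin g × Fin r → L)))
        = (q ^ (m * M)) ^ (g * r - dSR Fq ((Submodule.span L
            (C : Set (Fin g × Fin r → L)) : Submodule L (Fin g × Fin r → L)) :
            Set (Fin g × Fin r → L)) + 1)) := by
  have hdim := finrank_span_eq_finrank_of_forall_mem_range hCval
  have hdist := dSR_span_eq_of_forall_mem_range Fq hCval
  refine ⟨hdim, hdist, ?_⟩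
  rw [natCard_eq_pow_finrank (K := Fm) (V := C),
    natCard_eq_pow_finrank (K := L) (V := span L (C : Set (Fin g × Fin r → L))), hdim, hdist,
    Nat.card_eq_fintype_card, Nat.card_eq_fintype_card, hcm, hcL,
    (Nat.pow_right_injective (hcm ▸ Fintype.one_lt_card)).eq_iff,
    (Nat.pow_right_injective (hcL ▸ Fintype.one_lt_card)).eq_iff]

/-- Extending the field of linearity of a linear code from `F_{q^m}` to
`F_{q^{mM}}` preserves the dimension, the minimum sum-rank distance, and the MSRD
property (for the length partition `(g,r)` over `F_q`). -/
theorem extend_scalars_preserves_MSRD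
    (q m M g r : ℕ) (hq : IsPrimePow q) (hm : 0 < m) (hM : 0 < M)
    (hg : 0 < g) (hr : 0 < r)
    (Fq Fm L : Type) [Field Fq] [Field Fm] [Field L]
    [Fintype Fq] [Fintype Fm] [Fintype L]
    [Algebra Fq Fm] [Algebra Fm L] [Algebra Fq L] [IsScalarTower Fq Fm L]
    (hcq : Fintype.card Fq = q) (hcm : Fintype.card Fm = q ^ m)
    (hcL : Fintype.card L = q ^ (m * M))
    (C : Submodule Fm (Fin g × Fin r → L))
    (hCval : ∀ c ∈ C, ∀ x, c x ∈ Set.range (algebraMap Fm L))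
    (hC : C ≠ ⊥) :
    Module.finrank L ↥(Submodule.span L (C : Set (Fin g × Fin r → L)))
        = Module.finrank Fm ↥C ∧
    dSR Fq ((Submodule.span L (C : Set (Fin g × Fin r → L)) :
        Submodule L (Fin g × Fin r → L)) : Set (Fin g × Fin r → L))
        = dSR Fq (C : Set (Fin g × Fin r → L)) ∧
    (Nat.card ↥C
        = (q ^ m) ^ (g * r - dSR Fq (C : Set (Fin g × Fin r → L)) + 1) ↔
      Nat.card ↥(Submodule.span L (C : Set (Fin g × Fin r → L)))
        = (q ^ (m * M)) ^ (g * r - dSR Fq ((Submodule.span L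
            (C : Set (Fin g × Fin r → L)) : Submodule L (Fin g × Fin r → L)) :
            Set (Fin g × Fin r → L)) + 1)) :=
  extend_scalars_preserves_MSRD_general q m M g r Fq Fm L hcm hcL C hCval
end

section
/- Let Q ≥ 2 and μ ≥ 2 be coprime integers, let t be an integer with 1 ≤ t ≤ μ, and let s = ord_μ(Q) be the least positive integer such that μ divides Q^s − 1. For i ∈ {0, 1, …, μ−1}, let C_i = { i·Q^j mod μ : j ∈ ℕ } be the i-th Q-cyclotomic coset modulo μ. Then the size of the union C_0 ∪ C_1 ∪ C_2 ∪ ⋯ ∪ C_{t−1} satisfies |C_0 ∪ C_1 ∪ ⋯ ∪ C_{t−1}| ≤ 1 + s·⌈((Q−1)/Q)·(t−1)⌉. -/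
/-- Bound on the size of the union of the first `t` `Q`-cyclotomic cosets
modulo `μ`: `|C_0 ∪ C_1 ∪ ⋯ ∪ C_{t−1}| ≤ 1 + s·⌈((Q−1)/Q)·(t−1)⌉`, where `s` is the
multiplicative order of `Q` modulo `μ`. -/
theorem cyclotomic_cosets_union_card_bound
    (Q μ t s : ℕ) (hQ : 2 ≤ Q) (hμ : 2 ≤ μ) (hco : Nat.Coprime Q μ)
    (ht1 : 1 ≤ t) (ht2 : t ≤ μ)
    (hs1 : 0 < s) (hs2 : μ ∣ Q ^ s - 1)
    (hs3 : ∀ s' : ℕ, 0 < s' → μ ∣ Q ^ s' - 1 → s ≤ s') :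
    ((⋃ i ∈ Finset.range t,
        {x : ℕ | ∃ j : ℕ, x = (i * Q ^ j) % μ}).ncard : ℤ)
      ≤ 1 + (s : ℤ) * ⌈(((Q : ℚ) - 1) / (Q : ℚ)) * ((t : ℚ) - 1)⌉ := by
  have hQ0 : 0 < Q := by omega
  -- periodicity of the coset map
  have hper : ∀ i j : ℕ, (i * Q ^ j) % μ = (i * Q ^ (j % s)) % μ := by
    intro i j
    have h1 : (1 : ℕ) ≡ Q ^ s [MOD μ] :=
      (Nat.modEq_iff_dvd' (Nat.one_le_pow _ _ hQ0)).mpr hs2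
    have h2 : Q ^ j ≡ Q ^ (j % s) [MOD μ] := by
      conv_lhs => rw [← Nat.div_add_mod j s]
      rw [pow_add, pow_mul]
      calc (Q ^ s) ^ (j / s) * Q ^ (j % s)
          ≡ 1 ^ (j / s) * Q ^ (j % s) [MOD μ] :=
            Nat.ModEq.mul (Nat.ModEq.pow _ h1.symm) (Nat.ModEq.refl _)
        _ = Q ^ (j % s) := by ring
    exact h2.mul_left i
  -- collapse: every coset with i ≥ 1 is contained in a coset with Q ∤ m
  have hcollapse : ∀ i : ℕ, 1 ≤ i → ∃ m, 1 ≤ m ∧ m ≤ i ∧ ¬ Q ∣ m ∧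
      ∀ j, ∃ j', (i * Q ^ j) % μ = (m * Q ^ j') % μ := by
    intro i
    induction i using Nat.strong_induction_on with
    | _ i ih =>
      intro hi
      by_cases hd : Q ∣ i
      · obtain ⟨i', rfl⟩ := hd
        have hi' : 1 ≤ i' := by
          rcases Nat.eq_zero_or_pos i' with rfl | h
          · simp at hi
          · exact h
        have hlt : i' < Q * i' := by nlinarith
        obtain ⟨m, hm1, hm2, hm3, hm4⟩ := ih i' hlt hi'
        refine ⟨m, hm1, by omega, hm3, fun j => ?_⟩
        obtain ⟨j', h⟩ := hm4 (j + 1)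
        refine ⟨j', ?_⟩
        rw [← h]
        ring_nf
      · exact ⟨i, hi, le_refl _, hd, fun j => ⟨j, rfl⟩⟩
  classical
  set Cfin : ℕ → Finset ℕ := fun m => (Finset.range s).image (fun j => (m * Q ^ j) % μ) with hCfin
  set S : Finset ℕ := (Finset.Ico 1 t).filter (fun m => ¬ Q ∣ m) with hS
  set F : Finset ℕ := insert 0 (S.biUnion Cfin) with hF
  have hsub : (⋃ i ∈ Finset.range t, {x : ℕ | ∃ j : ℕ, x = (i * Q ^ j) % μ}) ⊆ ↑F := by
    intro x hx
    simp only [Set.mem_iUnion, Set.mem_setOf_eq, Finset.mem_range] at hx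
    obtain ⟨i, hi, j, rfl⟩ := hx
    rcases Nat.eq_zero_or_pos i with rfl | hipos
    · simp [hF]
    · obtain ⟨m, hm1, hm2, hm3, hm4⟩ := hcollapse i hipos
      obtain ⟨j', hj'⟩ := hm4 j
      rw [hj', hper m j']
      refine Finset.mem_coe.mpr (Finset.mem_insert_of_mem ?_)
      refine Finset.mem_biUnion.mpr ⟨m, ?_, ?_⟩
      · exact Finset.mem_filter.mpr ⟨Finset.mem_Ico.mpr ⟨hm1, by omega⟩, hm3⟩
      · exact Finset.mem_image.mpr ⟨j' % s, Finset.mem_range.mpr (Nat.mod_lt _ hs1), rfl⟩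
  have hcard1 : (⋃ i ∈ Finset.range t, {x : ℕ | ∃ j : ℕ, x = (i * Q ^ j) % μ}).ncard
      ≤ F.card := by
    have := Set.ncard_le_ncard hsub F.finite_toSet
    rwa [Set.ncard_coe_finset] at this
  have hcard2 : F.card ≤ 1 + s * S.card := by
    have h1 : F.card ≤ (S.biUnion Cfin).card + 1 := Finset.card_insert_le _ _
    have h2 : (S.biUnion Cfin).card ≤ ∑ m ∈ S, (Cfin m).card := Finset.card_biUnion_le
    have h3 : ∑ m ∈ S, (Cfin m).card ≤ ∑ _m ∈ S, s := by
      refine Finset.sum_le_sum fun m _ => ?_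
      calc (Cfin m).card ≤ (Finset.range s).card := Finset.card_image_le
        _ = s := Finset.card_range s
    simp only [Finset.sum_const, smul_eq_mul] at h3
    have hc : S.card * s = s * S.card := Nat.mul_comm _ _
    omega
  -- count of S
  have hScard : S.card = (t - 1) - (t - 1) / Q := by
    have h1 : Finset.Ico 1 t = Finset.Ioc 0 (t - 1) := by
      ext m
      simp only [Finset.mem_Ico, Finset.mem_Ioc]
      omega
    have h2 : ((Finset.Ioc 0 (t - 1)).filter (fun m => Q ∣ m)).card = (t - 1) / Q :=
      Nat.Ioc_filter_dvd_card_eq_div (t - 1) Q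
    have h3 := Finset.card_filter_add_card_filter_not
      (s := Finset.Ioc 0 (t - 1)) (p := fun m => Q ∣ m)
    rw [Nat.card_Ioc] at h3
    rw [hS, h1]
    omega
  have hSceil : (S.card : ℤ) ≤ ⌈(((Q : ℚ) - 1) / (Q : ℚ)) * ((t : ℚ) - 1)⌉ := by
    have key : ((S.card : ℤ) - 1 : ℚ) < (((Q : ℚ) - 1) / (Q : ℚ)) * ((t : ℚ) - 1) := by
      set a := t - 1 with ha
      set d := a / Q with hd
      have hda : d ≤ a := Nat.div_le_self _ _
      have hmod := Nat.div_add_mod a Q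
      have hmlt : a % Q < Q := Nat.mod_lt _ hQ0
      have hnat : a < Q * (d + 1) := by
        rw [hd]
        nlinarith [hmod, hmlt]
      have hta : ((t : ℚ) - 1) = (a : ℚ) := by
        rw [ha]
        push_cast [Nat.cast_sub ht1]
        ring
      rw [hScard, hta]
      rw [div_mul_eq_mul_div, lt_div_iff₀ (by positivity : (0:ℚ) < (Q:ℚ))]
      have hcast : (a : ℚ) < (Q : ℚ) * ((d : ℚ) + 1) := by exact_mod_cast hnat
      push_cast [Nat.cast_sub hda]
      nlinarith
    have := Int.lt_ceil.mpr (by exact_mod_cast key :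
      (((S.card : ℤ) - 1 : ℤ) : ℚ) < (((Q : ℚ) - 1) / (Q : ℚ)) * ((t : ℚ) - 1))
    omega
  have hfinal : ((1 + s * S.card : ℕ) : ℤ) ≤ 1 + (s : ℤ) * ⌈(((Q : ℚ) - 1) / (Q : ℚ)) * ((t : ℚ) - 1)⌉ := by
    push_cast
    have hs0 : (0 : ℤ) ≤ (s : ℤ) := by positivity
    nlinarith
  calc ((⋃ i ∈ Finset.range t, {x : ℕ | ∃ j : ℕ, x = (i * Q ^ j) % μ}).ncard : ℤ)
      ≤ ((1 + s * S.card : ℕ) : ℤ) := by exact_mod_cast le_trans hcard1 hcard2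
    _ ≤ _ := hfinal
end

section
/- Let q be a prime power and m a positive integer. The q − 1 elements of F_q^* (the nonzero elements of the subfield F_q of F_{q^m}) are pairwise non-conjugate in F_{q^m} with respect to σ(x) = x^q if and only if q − 1 and (q^m − 1)/(q − 1) are coprime. -/
/-- The `q − 1` nonzero elements of the subfield `F_q` are pairwise
non-conjugate in `F_{q^m}` with respect to `σ(x) = x^q` if and only if `q − 1` and
`(q^m − 1)/(q − 1)` are coprime. -/
theorem base_field_elements_pairwise_nonconjugate_iff_coprime
    (q m : ℕ) (hq : IsPrimePow q) (hm : 0 < m)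
    (Fq K : Type) [Field Fq] [Field K] [Fintype Fq] [Fintype K] [Algebra Fq K]
    (hcq : Fintype.card Fq = q) (hcK : Fintype.card K = q ^ m) :
    (∀ a b : Fq, a ≠ 0 → b ≠ 0 → a ≠ b →
      ¬ ∃ c : K, c ≠ 0 ∧
        algebraMap Fq K b = c ^ (q - 1) * algebraMap Fq K a)
    ↔ Nat.Coprime (q - 1) ((q ^ m - 1) / (q - 1)) := by
  classical
  have hq2 : 2 ≤ q := hq.two_le
  have hqm : 2 ≤ q ^ m := by
    calc 2 ≤ q := hq2
    _ = q ^ 1 := (pow_one q).symm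
    _ ≤ q ^ m := Nat.pow_le_pow_right (by omega) hm
  have hdvd : q - 1 ∣ q ^ m - 1 := by
    simpa using Nat.sub_dvd_pow_sub_pow q 1 m
  set N := (q ^ m - 1) / (q - 1) with hN
  have hmul : (q - 1) * N = q ^ m - 1 := Nat.mul_div_cancel' hdvd
  have hN1 : 1 ≤ N := by
    rcases Nat.eq_zero_or_pos N with h0 | h1
    · rw [h0, Nat.mul_zero] at hmul; omega
    · exact h1
  have hinj : Function.Injective (algebraMap Fq K) := (algebraMap Fq K).injective
  constructor
  · -- pairwise nonconjugate → coprime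
    intro h
    by_contra hnc
    set d := Nat.gcd (q - 1) N with hd
    have hdq : d ∣ q - 1 := Nat.gcd_dvd_left _ _
    have hdN : d ∣ N := Nat.gcd_dvd_right _ _
    have hd0 : d ≠ 0 := by
      intro h0
      have := Nat.eq_zero_of_gcd_eq_zero_left h0
      omega
    have hd1 : 1 < d := by
      have : d ≠ 1 := hnc
      omega
    obtain ⟨g, hg⟩ := IsCyclic.exists_generator (α := Kˣ)
    have hcard : Fintype.card Kˣ = q ^ m - 1 := by
      rw [Fintype.card_units, hcK]
    have horder : orderOf g = q ^ m - 1 := by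
      rw [orderOf_eq_card_of_forall_mem_zpowers hg, Nat.card_eq_fintype_card, hcard]
    set n := q ^ m - 1 with hn
    have hn0 : 0 < n := by omega
    have hdn : d ∣ n := hdq.trans hdvd
    have hnd_lt : n / d < n := Nat.div_lt_self hn0 hd1
    have hnd_pos : 0 < n / d :=
      Nat.div_pos (Nat.le_of_dvd hn0 hdn) (by omega)
    set u : Kˣ := g ^ (n / d) with hu
    have hu1 : u ≠ 1 := by
      intro h1
      have := orderOf_dvd_of_pow_eq_one (n := n / d) h1
      rw [horder] at this
      exact absurd (Nat.le_of_dvd hnd_pos this) (by omega)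
    set c : Kˣ := g ^ (N / d) with hc
    have hexp : N / d * (q - 1) = n / d := by
      obtain ⟨k, hk⟩ := hdN
      have hn' : n = d * (k * (q - 1)) := by
        rw [← hmul, hk]; ring
      rw [hk, hn', Nat.mul_div_cancel_left k (by omega),
        Nat.mul_div_cancel_left _ (by omega : 0 < d)]
    have huc : u = c ^ (q - 1) := by
      rw [hu, hc, ← pow_mul, hexp]
    have huq : u ^ (q - 1) = 1 := by
      obtain ⟨j, hj⟩ := hdq
      have : n / d * (q - 1) = n * j := by
        rw [hj, ← Nat.mul_assoc, Nat.div_mul_cancel hdn]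
      rw [hu, ← pow_mul, this, pow_mul, ← horder, pow_orderOf_eq_one, one_pow]
    -- counting: every (q-1)-th root of unity in K comes from Fq
    have hroot : ∀ v : K, v ^ (q - 1) = 1 → ∃ b : Fq, b ≠ 0 ∧ algebraMap Fq K b = v := by
      intro v hv
      set S : Finset K := (Polynomial.nthRoots (q - 1) (1 : K)).toFinset with hS
      set I : Finset K :=
        (Finset.univ.filter (fun b : Fq => b ≠ 0)).image (algebraMap Fq K) with hI
      have hIS : I ⊆ S := by
        intro x hx
        simp only [hI, Finset.mem_image, Finset.mem_filter] at hx
        obtain ⟨b, ⟨_, hb⟩, rfl⟩ := hx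
        rw [hS, Multiset.mem_toFinset,
          Polynomial.mem_nthRoots (by omega : 0 < q - 1), ← map_pow]
        have hb1 := FiniteField.pow_card_sub_one_eq_one b hb
        rw [hcq] at hb1
        rw [hb1, map_one]
      have hcardI : I.card = q - 1 := by
        rw [hI, Finset.card_image_of_injective _ hinj]
        have : (Finset.univ.filter (fun b : Fq => b ≠ 0)) = Finset.univ.erase 0 := by
          ext x; simp [Finset.mem_erase, and_comm]
        rw [this, Finset.card_erase_of_mem (Finset.mem_univ 0), Finset.card_univ, hcq]
      have hScard : S.card ≤ q - 1 :=
        le_trans (Multiset.toFinset_card_le _) (Polynomial.card_nthRoots (q - 1) (1 : K))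
      have hSI : I = S := Finset.eq_of_subset_of_card_le hIS (hcardI ▸ hScard)
      have hvS : v ∈ S := by
        rw [hS, Multiset.mem_toFinset, Polynomial.mem_nthRoots (by omega : 0 < q - 1)]
        exact hv
      rw [← hSI, hI, Finset.mem_image] at hvS
      obtain ⟨b, hb, hbv⟩ := hvS
      simp only [Finset.mem_filter] at hb
      exact ⟨b, hb.2, hbv⟩
    have huK : ((u : K)) ^ (q - 1) = 1 := by
      rw [← Units.val_pow_eq_pow_val, huq, Units.val_one]
    obtain ⟨b, hb0, hbu⟩ := hroot u huK
    have hb1 : (1 : Fq) ≠ b := by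
      intro h1
      apply hu1
      have : (u : K) = 1 := by rw [← hbu, ← h1, map_one]
      exact Units.ext this
    refine h 1 b one_ne_zero hb0 hb1 ⟨(c : K), c.ne_zero, ?_⟩
    rw [hbu, map_one, mul_one, huc, Units.val_pow_eq_pow_val]
  · -- coprime → pairwise nonconjugate
    intro hco a b ha hb hab hex
    obtain ⟨c, hc, hcb⟩ := hex
    set x : K := algebraMap Fq K b * (algebraMap Fq K a)⁻¹ with hx
    have ha' : algebraMap Fq K a ≠ 0 := fun h0 => ha (hinj (by simpa using h0))
    have hb' : algebraMap Fq K b ≠ 0 := fun h0 => hb (hinj (by simpa using h0))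
    have hxq : x ^ (q - 1) = 1 := by
      have hba : b * a⁻¹ ≠ 0 := mul_ne_zero hb (inv_ne_zero ha)
      have h1 := FiniteField.pow_card_sub_one_eq_one (b * a⁻¹) hba
      rw [hcq] at h1
      have hmap : x = algebraMap Fq K (b * a⁻¹) := by
        rw [hx, map_mul, map_inv₀]
      rw [hmap, ← map_pow, h1, map_one]
    have hxN : x ^ N = 1 := by
      have hxc : x = c ^ (q - 1) := by
        rw [hx, hcb, mul_assoc, mul_inv_cancel₀ ha', mul_one]
      rw [hxc, ← pow_mul, hmul]
      have h1 := FiniteField.pow_card_sub_one_eq_one c hc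
      rw [hcK] at h1
      exact h1
    have hx1 : x = 1 := by
      have h1 : orderOf x ∣ q - 1 := orderOf_dvd_of_pow_eq_one hxq
      have h2 : orderOf x ∣ N := orderOf_dvd_of_pow_eq_one hxN
      have h3 : orderOf x ∣ 1 := hco ▸ Nat.dvd_gcd h1 h2
      exact orderOf_eq_one_iff.mp (Nat.dvd_one.mp h3)
    rw [hx, mul_inv_eq_one₀ ha'] at hx1
    exact hab (hinj hx1).symm
end

section
/- Let q be a prime power and m, r, g positive integers, and let C ⊆ F_{q^m}^{gr} be any (linear or non-linear) code with |C| ≥ 2. Then |C| ≤ q^{m(gr − d_SR(C) + 1)}, where d_SR(C) is the minimum sum-rank distance of C for the length partition (g, r) over F_q. Moreover, equality holds if and only if, for all invertible matrices A_1, A_2, …, A_g ∈ GL_r(F_q), the code C·diag(A_1, A_2, …, A_g) ⊆ F_{q^m}^{gr} is an MDS code (with respect to the Hamming metric), where diag denotes the block-diagonal matrix. -/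
/-- The Hamming distance between two vectors: the number of coordinates where they
differ. -/
noncomputable def hdist {F ι : Type} (c d : ι → F) : ℕ :=
  Nat.card {i // c i ≠ d i}

/-- The minimum Hamming distance of a code (a set of vectors). -/
noncomputable def minHD {F ι : Type} (S : Set (ι → F)) : ℕ :=
  sInf {w | ∃ c ∈ S, ∃ d ∈ S, c ≠ d ∧ hdist c d = w}

open Submodule Module Matrix

lemma exists_pair_eq_sInf {α : Type*} {S : Set α} (hS : 2 ≤ Nat.card S) (δ : α → α → ℕ) :
    ∃ c ∈ S, ∃ d ∈ S, c ≠ d ∧ δ c d = sInf {w | ∃ c ∈ S, ∃ d ∈ S, c ≠ d ∧ δ c d = w} := by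
  have : Finite S := Nat.finite_of_card_ne_zero (by omega)
  have : Nontrivial S := Finite.one_lt_card_iff_nontrivial.mp hS
  obtain ⟨⟨a, ha⟩, ⟨b, hb⟩, hab⟩ := exists_pair_ne ↥S
  have hne : {w | ∃ c ∈ S, ∃ d ∈ S, c ≠ d ∧ δ c d = w}.Nonempty :=
    ⟨δ a b, a, ha, b, hb, fun h => hab (Subtype.ext h), rfl⟩
  exact Nat.sInf_mem hne

section Hamming

variable {F ι : Type}

lemma hdist_eq_hammingNorm_sub [Fintype ι] [AddGroup F] [DecidableEq F] (c d : ι → F) :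
    hdist c d = hammingNorm (c - d) := by
  simp only [hdist, hammingNorm, Nat.card_eq_fintype_card, Fintype.card_subtype, Pi.sub_apply,
    sub_ne_zero]

lemma hdist_eq_hammingDist [Fintype ι] [DecidableEq F] (c d : ι → F) :
    hdist c d = hammingDist c d := by
  simp only [hdist, hammingDist, Nat.card_eq_fintype_card, Fintype.card_subtype]

lemma hammingNorm_eq_sum_curry {κ : Type} [Fintype ι] [Fintype κ] [Zero F] [DecidableEq F]
    (v : ι × κ → F) :
    hammingNorm v = ∑ i, hammingNorm (Function.curry v i) := by
  unfold hammingNorm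
  rw [Finset.card_filter, Fintype.sum_prod_type]
  exact Finset.sum_congr rfl fun i _ => (Finset.card_filter _ _).symm

lemma minHD_le_hdist {S : Set (ι → F)} {c d : ι → F} (hc : c ∈ S) (hd : d ∈ S) (hcd : c ≠ d) :
    minHD S ≤ hdist c d :=
  Nat.sInf_le ⟨c, hc, d, hd, hcd, rfl⟩

theorem card_le_pow_card_sub_minHD_add_one [Fintype ι] [Fintype F] {S : Set (ι → F)}
    (hS : 2 ≤ Nat.card S) :
    Nat.card S ≤ Fintype.card F ^ (Fintype.card ι - minHD S + 1) := by
  classical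
  obtain ⟨c, hc, d, hd, hcd, hmin : hdist c d = minHD S⟩ := exists_pair_eq_sInf hS hdist
  rw [hdist_eq_hammingDist] at hmin
  have hpos : 0 < minHD S := hmin ▸ hammingDist_pos.mpr hcd
  have hle : minHD S ≤ Fintype.card ι := hmin ▸ hammingDist_le_card_fintype
  obtain ⟨T, -, hT⟩ := Finset.exists_subset_card_eq (s := (Finset.univ : Finset ι))
    (n := minHD S - 1) (by simp only [Finset.card_univ]; omega)
  -- Codewords agreeing outside `T` are at distance `< minHD S`, hence equal.
  have hinj : Function.Injective fun (a : S) (i : {i // i ∉ T}) => a.1 i := by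
    rintro ⟨a, ha⟩ ⟨b, hb⟩ hab
    by_contra hne
    have hsub : ({i | a i ≠ b i} : Finset ι) ⊆ T := fun i hi => by
      by_contra hiT
      exact (Finset.mem_filter.mp hi).2 (congrFun hab ⟨i, hiT⟩)
    have hfar := minHD_le_hdist ha hb (fun h => hne (Subtype.ext h))
    have hnear : hammingDist a b ≤ T.card := Finset.card_le_card hsub
    rw [hdist_eq_hammingDist] at hfar
    omega
  calc Nat.card S ≤ Nat.card ({i // i ∉ T} → F) := Nat.card_le_card_of_injective _ hinj
    _ = Fintype.card F ^ (Fintype.card ι - minHD S + 1) := by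
      rw [Nat.card_eq_fintype_card, Fintype.card_fun, Fintype.card_subtype_compl,
        Fintype.card_coe, hT]
      congr 1
      omega

end Hamming

lemma exists_basis_hammingNorm_comp_le {k V W ι : Type} [Field k] [AddCommGroup V] [Module k V]
    [FiniteDimensional k V] [AddCommGroup W] [Module k W] [DecidableEq W] [Fintype ι]
    (f : V →ₗ[k] W) (hι : Fintype.card ι = finrank k V) :
    ∃ b : Basis ι k V, hammingNorm (f ∘ b) ≤ finrank k (LinearMap.range f) := by
  classical
  obtain ⟨U, hU⟩ := Submodule.exists_isCompl (LinearMap.ker f)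
  have hdim := Submodule.finrank_add_eq_of_isCompl hU
  have hrank := LinearMap.finrank_range_add_finrank_ker f
  let e : Fin (finrank k (LinearMap.ker f)) ⊕ Fin (finrank k U) ≃ ι :=
    Fintype.equivOfCardEq (by simp only [Fintype.card_sum, Fintype.card_fin]; omega)
  let b : Basis ι k V := (((finBasis k _).prod (finBasis k U)).map
    (Submodule.prodEquivOfIsCompl _ U hU)).reindex e
  refine ⟨b, ?_⟩
  have hsub : ({i | f (b i) ≠ 0} : Finset ι) ⊆ Finset.univ.image (e ∘ Sum.inr) := by
    intro i hi
    obtain ⟨w | u, rfl⟩ := e.surjective i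
    · refine absurd ?_ (Finset.mem_filter.mp hi).2
      simp [b]
    · exact Finset.mem_image_of_mem _ (Finset.mem_univ u)
  calc hammingNorm (f ∘ b) ≤ (Finset.univ.image (e ∘ Sum.inr)).card := Finset.card_le_card hsub
    _ ≤ finrank k U := Finset.card_image_le.trans (by simp)
    _ = finrank k (LinearMap.range f) := by omega

section BlockMatrices

variable {Fq K : Type} [Field Fq] [Field K] [Algebra Fq K]

lemma vecMul_map_algebraMap_apply {κ κ' : Type} [Fintype κ] (v : κ → K)
    (A : Matrix κ κ' Fq) (j : κ') :
    (v ᵥ* A.map (algebraMap Fq K)) j = ∑ k, A k j • v k := by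
  simp only [vecMul, dotProduct, map_apply, Algebra.smul_def, mul_comm]

lemma span_range_vecMul_map_le {κ κ' : Type} [Fintype κ] (v : κ → K) (A : Matrix κ κ' Fq) :
    span Fq (Set.range (v ᵥ* A.map (algebraMap Fq K))) ≤ span Fq (Set.range v) := by
  rw [span_le]
  rintro _ ⟨j, rfl⟩
  rw [vecMul_map_algebraMap_apply]
  exact sum_mem fun k _ => smul_mem _ _ (subset_span ⟨k, rfl⟩)

lemma span_range_vecMul_map_eq {κ : Type} [Fintype κ] [DecidableEq κ] (v : κ → K)
    {A : Matrix κ κ Fq} (hA : IsUnit A.det) :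
    span Fq (Set.range (v ᵥ* A.map (algebraMap Fq K))) = span Fq (Set.range v) := by
  refine le_antisymm (span_range_vecMul_map_le v A) ?_
  simpa only [vecMul_vecMul, ← Matrix.map_mul, mul_nonsing_inv _ hA, Matrix.map_one,
    map_zero, map_one, vecMul_one] using span_range_vecMul_map_le (v ᵥ* A.map (algebraMap Fq K)) A⁻¹

lemma finrank_span_range_le_hammingNorm {κ : Type} [Fintype κ] [DecidableEq K] (v : κ → K) :
    finrank Fq (span Fq (Set.range v)) ≤ hammingNorm v := by
  have hle : span Fq (Set.range v) ≤ span Fq (Set.range fun j : {j // v j ≠ 0} => v j) := by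
    rw [span_le]
    rintro _ ⟨j, rfl⟩
    by_cases hj : v j = 0
    · rw [hj]
      exact zero_mem _
    · exact subset_span ⟨⟨j, hj⟩, rfl⟩
  have := Module.Finite.span_of_finite Fq (Set.finite_range fun j : {j // v j ≠ 0} => v j)
  calc finrank Fq (span Fq (Set.range v))
      ≤ finrank Fq (span Fq (Set.range fun j : {j // v j ≠ 0} => v j)) := finrank_mono hle
    _ ≤ Fintype.card {j // v j ≠ 0} := finrank_range_le_card _
    _ = hammingNorm v := Fintype.card_subtype _

lemma exists_hammingNorm_vecMul_map_eq_finrank {κ : Type} [Fintype κ] [DecidableEq κ]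
    [DecidableEq K] (v : κ → K) :
    ∃ A : Matrix κ κ Fq, IsUnit A.det ∧
      hammingNorm (v ᵥ* A.map (algebraMap Fq K)) = finrank Fq (span Fq (Set.range v)) := by
  obtain ⟨b, hb⟩ := exists_basis_hammingNorm_comp_le (Fintype.linearCombination Fq v)
    (finrank_fintype_fun_eq_card Fq).symm
  let A := (Pi.basisFun Fq κ).toMatrix b
  have : Invertible A := (Pi.basisFun Fq κ).invertibleToMatrix b
  have hAv : v ᵥ* A.map (algebraMap Fq K) = Fintype.linearCombination Fq v ∘ b := by
    ext j
    simp [vecMul_map_algebraMap_apply, Fintype.linearCombination_apply, A, Basis.toMatrix_apply]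
  refine ⟨A, isUnit_det_of_invertible A, le_antisymm ?_ ?_⟩
  · rw [hAv, ← Fintype.range_linearCombination]
    exact hb
  · rw [← span_range_vecMul_map_eq v (isUnit_det_of_invertible A)]
    exact finrank_span_range_le_hammingNorm _

variable {ι : Type} [Fintype ι] {r : ℕ}

lemma wtSR_eq_sum_curry (c : ι × Fin r → K) :
    wtSR Fq c = ∑ i, finrank Fq (span Fq (Set.range (Function.curry c i))) :=
  rfl

lemma wtSR_le_hammingNorm [DecidableEq K] (c : ι × Fin r → K) :
    wtSR Fq c ≤ hammingNorm c := by
  rw [wtSR_eq_sum_curry, hammingNorm_eq_sum_curry]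
  exact Finset.sum_le_sum fun i _ => finrank_span_range_le_hammingNorm _

variable [DecidableEq ι]

lemma curry_vecMul_blockDiag (c : ι × Fin r → K) (A : ι → Matrix (Fin r) (Fin r) Fq) (i : ι) :
    Function.curry (c ᵥ* BlockDiag Fq K A) i
      = Function.curry c i ᵥ* (A i).map (algebraMap Fq K) := by
  ext j
  simp only [Function.curry_apply, vecMul, dotProduct, BlockDiag, Fintype.sum_prod_type,
    mul_ite, mul_zero, map_apply]
  rw [Fintype.sum_eq_single i fun x hx => by simp only [hx, if_false, Finset.sum_const_zero]]
  simp only [↓reduceIte]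

lemma wtSR_vecMul_blockDiag (c : ι × Fin r → K) {A : ι → Matrix (Fin r) (Fin r) Fq}
    (hA : ∀ i, IsUnit (A i).det) :
    wtSR Fq (c ᵥ* BlockDiag Fq K A) = wtSR Fq c := by
  rw [wtSR_eq_sum_curry, wtSR_eq_sum_curry]
  exact Finset.sum_congr rfl fun i _ => by
    rw [curry_vecMul_blockDiag, span_range_vecMul_map_eq _ (hA i)]

lemma vecMul_blockDiag_injective {A : ι → Matrix (Fin r) (Fin r) Fq}
    (hA : ∀ i, IsUnit (A i).det) :
    Function.Injective fun c : ι × Fin r → K => c ᵥ* BlockDiag Fq K A := by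
  intro c d hcd
  ext ⟨i, j⟩
  have hblock := congrArg (Function.curry · i) hcd
  simp only [curry_vecMul_blockDiag] at hblock
  have hunit : IsUnit ((A i).map (algebraMap Fq K)) :=
    ((isUnit_iff_isUnit_det _).mpr (hA i)).map (algebraMap Fq K).mapMatrix
  exact congrFun (vecMul_injective_of_isUnit hunit hblock) j

lemma exists_hammingNorm_vecMul_blockDiag_eq_wtSR [DecidableEq K] (c : ι × Fin r → K) :
    ∃ A : ι → Matrix (Fin r) (Fin r) Fq, (∀ i, IsUnit (A i).det) ∧
      hammingNorm (c ᵥ* BlockDiag Fq K A) = wtSR Fq c := by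
  choose A hA hnorm using fun i => exists_hammingNorm_vecMul_map_eq_finrank (Fq := Fq)
    (Function.curry c i)
  refine ⟨A, hA, ?_⟩
  simp only [hammingNorm_eq_sum_curry, wtSR_eq_sum_curry, curry_vecMul_blockDiag, hnorm]

variable {C : Set (ι × Fin r → K)} {A : ι → Matrix (Fin r) (Fin r) Fq}

lemma card_image_vecMul_blockDiag (hA : ∀ i, IsUnit (A i).det) :
    Nat.card ((· ᵥ* BlockDiag Fq K A) '' C) = Nat.card C :=
  Nat.card_image_of_injective (vecMul_blockDiag_injective hA) C

lemma dSR_le_minHD_image (hC : 2 ≤ Nat.card C) (hA : ∀ i, IsUnit (A i).det) :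
    dSR Fq C ≤ minHD ((· ᵥ* BlockDiag Fq K A) '' C) := by
  classical
  obtain ⟨_, ⟨a, ha, rfl⟩, _, ⟨b, hb, rfl⟩, hab, hmin⟩ :=
    exists_pair_eq_sInf ((card_image_vecMul_blockDiag (C := C) hA).symm ▸ hC) hdist
  calc dSR Fq C ≤ wtSR Fq (a - b) := Nat.sInf_le ⟨a, ha, b, hb, fun h => hab (h ▸ rfl), rfl⟩
    _ = wtSR Fq ((a - b) ᵥ* BlockDiag Fq K A) := (wtSR_vecMul_blockDiag _ hA).symm
    _ ≤ hammingNorm ((a - b) ᵥ* BlockDiag Fq K A) := wtSR_le_hammingNorm _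
    _ = minHD ((· ᵥ* BlockDiag Fq K A) '' C) := by
      rw [sub_vecMul, ← hdist_eq_hammingNorm_sub]
      exact hmin

lemma exists_minHD_image_eq_dSR (hC : 2 ≤ Nat.card C) :
    ∃ A : ι → Matrix (Fin r) (Fin r) Fq, (∀ i, IsUnit (A i).det) ∧
      minHD ((· ᵥ* BlockDiag Fq K A) '' C) = dSR Fq C := by
  classical
  obtain ⟨c, hc, d, hd, hcd, hmin⟩ := exists_pair_eq_sInf hC fun c d => wtSR Fq (c - d)
  obtain ⟨A, hA, hnorm⟩ := exists_hammingNorm_vecMul_blockDiag_eq_wtSR (Fq := Fq) (c - d)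
  refine ⟨A, hA, le_antisymm ?_ (dSR_le_minHD_image hC hA)⟩
  calc minHD ((· ᵥ* BlockDiag Fq K A) '' C)
      ≤ hdist (c ᵥ* BlockDiag Fq K A) (d ᵥ* BlockDiag Fq K A) :=
        minHD_le_hdist (Set.mem_image_of_mem _ hc) (Set.mem_image_of_mem _ hd)
          ((vecMul_blockDiag_injective hA).ne hcd)
    _ = dSR Fq C := by
      rw [hdist_eq_hammingNorm_sub, ← sub_vecMul, hnorm]
      exact hmin

end BlockMatrices

theorem sum_rank_singleton_bound_general
    (q m g r : ℕ)
    (Fq K : Type) [Field Fq] [Field K] [Fintype K] [Algebra Fq K]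
    (hcK : Fintype.card K = q ^ m)
    (C : Set (Fin g × Fin r → K)) (hC : 2 ≤ Nat.card ↥C) :
    Nat.card ↥C ≤ (q ^ m) ^ (g * r - dSR Fq C + 1) ∧
    (Nat.card ↥C = (q ^ m) ^ (g * r - dSR Fq C + 1) ↔
      ∀ A : Fin g → Matrix (Fin r) (Fin r) Fq, (∀ i, IsUnit (A i).det) →
        Nat.card ↥((fun c => Matrix.vecMul c (BlockDiag Fq K A)) '' C)
          = (q ^ m) ^ (g * r -
              minHD ((fun c => Matrix.vecMul c (BlockDiag Fq K A)) '' C) + 1)) := by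
  have hsingleton (A : Fin g → Matrix (Fin r) (Fin r) Fq) (hA : ∀ i, IsUnit (A i).det) :
      Nat.card C ≤ (q ^ m) ^ (g * r - minHD ((· ᵥ* BlockDiag Fq K A) '' C) + 1) := by
    have hHamming := card_le_pow_card_sub_minHD_add_one ((card_image_vecMul_blockDiag (C := C) hA).symm ▸ hC)
    rwa [card_image_vecMul_blockDiag hA, hcK, Fintype.card_prod, Fintype.card_fin,
      Fintype.card_fin] at hHamming
  obtain ⟨A₀, hA₀, hA₀min⟩ := exists_minHD_image_eq_dSR (Fq := Fq) hC
  refine ⟨hA₀min ▸ hsingleton A₀ hA₀, fun hmax A hA => ?_, fun hMDS => ?_⟩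
  · rw [card_image_vecMul_blockDiag hA]
    refine le_antisymm (hsingleton A hA) (hmax ▸ Nat.pow_le_pow_right ?_ ?_)
    · exact hcK ▸ Fintype.card_pos
    · have := dSR_le_minHD_image hC hA
      omega
  · simpa only [card_image_vecMul_blockDiag hA₀, hA₀min] using hMDS A₀ hA₀

/-- (Singleton bound for the sum-rank metric.) Any code `C ⊆ F_{q^m}^{gr}`
with `|C| ≥ 2` satisfies `|C| ≤ q^{m(gr − d_SR(C) + 1)}`, with equality iff
`C·diag(A_1,…,A_g)` is MDS for all invertible `A_1,…,A_g ∈ GL_r(F_q)`. -/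
theorem sum_rank_singleton_bound
    (q m g r : ℕ) (hq : IsPrimePow q) (hm : 0 < m) (hg : 0 < g) (hr : 0 < r)
    (Fq K : Type) [Field Fq] [Field K] [Fintype Fq] [Fintype K] [Algebra Fq K]
    (hcq : Fintype.card Fq = q) (hcK : Fintype.card K = q ^ m)
    (C : Set (Fin g × Fin r → K)) (hC : 2 ≤ Nat.card ↥C) :
    Nat.card ↥C ≤ (q ^ m) ^ (g * r - dSR Fq C + 1) ∧
    (Nat.card ↥C = (q ^ m) ^ (g * r - dSR Fq C + 1) ↔
      ∀ A : Fin g → Matrix (Fin r) (Fin r) Fq, (∀ i, IsUnit (A i).det) →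
        Nat.card ↥((fun c => Matrix.vecMul c (BlockDiag Fq K A)) '' C)
          = (q ^ m) ^ (g * r -
              minHD ((fun c => Matrix.vecMul c (BlockDiag Fq K A)) '' C) + 1)) :=
  sum_rank_singleton_bound_general q m g r Fq K hcK C hC
end
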